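/- arXiv:2604.02115 — 6 statements merged into one kernel-verified Lean document; each statement's English description precedes it below -/
import Mathlib

section
/- Let Q be a rational constellation pattern with k ≥ 2 and let n be a positive integer. A set X of integers is of the form {s + q_0·d, s + q_1·d, ..., s + q_k·d} ⊆ [n] for some s, d ∈ ℤ with d ≠ 0 (all points s + q_i·d being integers) if and only if X = {x_0(p,q), x_1(p,q), ..., x_k(p,q)} ⊆ [n] for some p, q ∈ [n] with p ≠ q and p ≡ q (mod D). -/
/-- The point `xᵢ(p,q) = ((D − aᵢ)p + aᵢ q)/D` as a rational number. -/
def xpt (D : ℕ) (a : ℕ → ℤ) (i : ℕ) (p q : ℤ) : ℚ :=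
  (((D : ℚ) - (a i : ℚ)) * (p : ℚ) + (a i : ℚ) * (q : ℚ)) / (D : ℚ)

lemma xpt_eq (D : ℕ) (hD : 0 < D) (a : ℕ → ℤ) (i : ℕ) (qi : ℚ)
    (ha : (a i : ℚ) = (D : ℚ) * qi) (p q' : ℤ) :
    xpt D a i p q' = (p : ℚ) + qi * ((q' : ℚ) - (p : ℚ)) := by
  have hD0 : (D : ℚ) ≠ 0 := by positivity
  unfold xpt
  rw [ha]; field_simp; ring

lemma min_dvd (k D : ℕ) (hD : 0 < D) (q : ℕ → ℚ)
    (hDden : ∀ i ≤ k, ((D : ℚ) * q i).den = 1)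
    (hDmin : ∀ D' : ℕ, 0 < D' → (∀ i ≤ k, ((D' : ℚ) * q i).den = 1) → D ≤ D')
    (d : ℤ) (hd : ∀ i ≤ k, ∃ z : ℤ, (d : ℚ) * q i = z) : (D : ℤ) ∣ d := by
  set r := d % (D : ℤ) with hr
  have hrnn : 0 ≤ r := Int.emod_nonneg d (by exact_mod_cast hD.ne')
  have hrlt : r < D := Int.emod_lt_of_pos d (by exact_mod_cast hD)
  by_contra h
  have hr0 : r ≠ 0 := fun h0 => h (Int.dvd_of_emod_eq_zero h0)
  have hrpos : 0 < r := lt_of_le_of_ne hrnn (Ne.symm hr0)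
  have key : ∀ i ≤ k, ((r.toNat : ℚ) * q i).den = 1 := by
    intro i hi
    obtain ⟨z, hz⟩ := hd i hi
    have hw : ((((D : ℚ) * q i).num : ℤ) : ℚ) = (D : ℚ) * q i :=
      (Rat.den_eq_one_iff _).mp (hDden i hi)
    have hrc : (r.toNat : ℚ) = (d : ℚ) - (D : ℚ) * ((d / (D : ℤ) : ℤ) : ℚ) := by
      have h1 : ((r.toNat : ℤ) : ℚ) = ((d - (D : ℤ) * (d / (D : ℤ)) : ℤ) : ℚ) := by
        rw [Int.toNat_of_nonneg hrnn, hr, Int.emod_def]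
      push_cast at h1
      exact_mod_cast h1
    have : (r.toNat : ℚ) * q i = ((z - (d / (D : ℤ)) * ((D : ℚ) * q i).num : ℤ) : ℚ) := by
      push_cast
      rw [hrc, hw]
      ring_nf
      nlinarith [hz, hw]
    rw [this, Rat.den_intCast]
  have hle : D ≤ r.toNat := hDmin r.toNat (by omega) key
  omega

/-- the two descriptions of a `Q`-constellation in `[n]` are equivalent. -/
theorem stmt_1 (k : ℕ) (hk : 2 ≤ k) (q : ℕ → ℚ)
    (hq0 : q 0 = 0) (hqk : q k = 1)
    (hmono : ∀ i j : ℕ, i < j → j ≤ k → q i < q j)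
    (D : ℕ) (hD : 0 < D)
    (hDden : ∀ i ≤ k, ((D : ℚ) * q i).den = 1)
    (hDmin : ∀ D' : ℕ, 0 < D' → (∀ i ≤ k, ((D' : ℚ) * q i).den = 1) → D ≤ D')
    (a : ℕ → ℤ) (ha : ∀ i ≤ k, (a i : ℚ) = (D : ℚ) * q i)
    (n : ℕ) (hn : 0 < n) (X : Finset ℤ) :
    ((∀ m ∈ X, 1 ≤ m ∧ m ≤ (n : ℤ)) ∧
      ∃ s d : ℤ, d ≠ 0 ∧
        (∀ i ≤ k, ∃ m ∈ X, (m : ℚ) = (s : ℚ) + q i * (d : ℚ)) ∧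
        (∀ m ∈ X, ∃ i ≤ k, (m : ℚ) = (s : ℚ) + q i * (d : ℚ)))
    ↔
    ((∀ m ∈ X, 1 ≤ m ∧ m ≤ (n : ℤ)) ∧
      ∃ p q' : ℤ, (1 ≤ p ∧ p ≤ (n : ℤ)) ∧ (1 ≤ q' ∧ q' ≤ (n : ℤ)) ∧ p ≠ q' ∧
        p ≡ q' [ZMOD (D : ℤ)] ∧
        (∀ i ≤ k, ∃ m ∈ X, (m : ℚ) = xpt D a i p q') ∧
        (∀ m ∈ X, ∃ i ≤ k, (m : ℚ) = xpt D a i p q')) := by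
  constructor
  · rintro ⟨hX, s, d, hd, hall, honly⟩
    refine ⟨hX, ?_⟩
    -- s ∈ X
    obtain ⟨m0, hm0X, hm0⟩ := hall 0 (Nat.zero_le k)
    rw [hq0] at hm0
    have hm0' : m0 = s := by
      have : (m0 : ℚ) = (s : ℚ) := by linarith
      exact_mod_cast this
    obtain ⟨mk, hmkX, hmk⟩ := hall k le_rfl
    rw [hqk] at hmk
    have hmk' : mk = s + d := by
      have : (mk : ℚ) = (s : ℚ) + (d : ℚ) := by linarith
      exact_mod_cast this
    -- integrality of q i * d
    have hint : ∀ i ≤ k, ∃ z : ℤ, (d : ℚ) * q i = z := by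
      intro i hi
      obtain ⟨m, hmX, hm⟩ := hall i hi
      exact ⟨m - s, by push_cast; linarith [hm]⟩
    have hdvd : (D : ℤ) ∣ d := min_dvd k D hD q hDden hDmin d hint
    have hs := hX m0 hm0X
    have hsd := hX mk hmkX
    rw [hm0'] at hs; rw [hmk'] at hsd
    refine ⟨s, s + d, hs, hsd, by omega, ?_, ?_, ?_⟩
    · exact (Int.modEq_iff_dvd.mpr (by simpa using hdvd))
    · intro i hi
      obtain ⟨m, hmX, hm⟩ := hall i hi
      refine ⟨m, hmX, ?_⟩
      rw [xpt_eq D hD a i (q i) (ha i hi)]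
      push_cast
      rw [hm]; ring
    · intro m hmX
      obtain ⟨i, hi, hm⟩ := honly m hmX
      refine ⟨i, hi, ?_⟩
      rw [xpt_eq D hD a i (q i) (ha i hi)]
      push_cast
      rw [hm]; ring
  · rintro ⟨hX, p, q', _, _, hne, _, hall, honly⟩
    refine ⟨hX, p, q' - p, by omega, ?_, ?_⟩
    · intro i hi
      obtain ⟨m, hmX, hm⟩ := hall i hi
      refine ⟨m, hmX, ?_⟩
      rw [hm, xpt_eq D hD a i (q i) (ha i hi)]
      push_cast
      ring
    · intro m hmX
      obtain ⟨i, hi, hm⟩ := honly m hmX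
      refine ⟨i, hi, ?_⟩
      rw [hm, xpt_eq D hD a i (q i) (ha i hi)]
      push_cast
      ring
end

section
/- Let Q be a rational constellation pattern with k ≥ 2, and let p, q, p', q' be integers with p ≠ q and p' ≠ q'. If the sets {x_i(p,q) : 0 ≤ i ≤ k} and {x_i(p',q') : 0 ≤ i ≤ k} of rational numbers are equal, then {p, q} = {p', q'}. Moreover, for p ≠ q, the equality {x_i(p,q) : 0 ≤ i ≤ k} = {x_i(q,p) : 0 ≤ i ≤ k} holds if and only if Q is symmetric. -/
/-- The set `{xᵢ(p,q) : 0 ≤ i ≤ k}` of rational numbers. -/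
def xset (D : ℕ) (a : ℕ → ℤ) (k : ℕ) (p q : ℤ) : Set ℚ :=
  {z : ℚ | ∃ i ≤ k, z = xpt D a i p q}

/-- Two strictly increasing enumerations of the same set agree pointwise. -/
lemma key_enum (k : ℕ) (f g : ℕ → ℚ)
    (hf : ∀ i j, i < j → j ≤ k → f i < f j)
    (hg : ∀ i j, i < j → j ≤ k → g i < g j)
    (hset : ∀ z, (∃ i ≤ k, z = f i) ↔ (∃ i ≤ k, z = g i)) :
    ∀ i ≤ k, f i = g i := by
  have half : ∀ (f g : ℕ → ℚ), (∀ i j, i < j → j ≤ k → f i < f j) →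
      (∀ i j, i < j → j ≤ k → g i < g j) →
      (∀ z, (∃ i ≤ k, z = f i) → (∃ i ≤ k, z = g i)) →
      ∀ i ≤ k, (∀ j, j < i → j ≤ k → f j = g j) → g i ≤ f i := by
    intro f g hf hg hsub i hik IH
    obtain ⟨m, hm, he⟩ := hsub (f i) ⟨i, hik, rfl⟩
    rcases lt_trichotomy m i with h | rfl | h
    · exfalso
      have h1 := IH m h (le_trans h.le hik)
      have h2 := hf m i h hik
      rw [h1, ← he] at h2
      exact lt_irrefl _ h2
    · exact he.ge
    · have h2 := hg i m h hm
      rw [← he] at h2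
      exact h2.le
  intro i
  induction i using Nat.strong_induction_on with
  | _ i IH =>
    intro hik
    have h1 := half f g hf hg (fun z hz => (hset z).mp hz) i hik
      (fun j hj hjk => IH j hj hjk)
    have h2 := half g f hg hf (fun z hz => (hset z).mpr hz) i hik
      (fun j hj hjk => (IH j hj hjk).symm)
    exact le_antisymm h2 h1

/-- endpoints are determined by the constellation, and the reversed
endpoint pair gives the same constellation iff the pattern is symmetric. -/
theorem stmt_3 (k : ℕ) (hk : 2 ≤ k) (q : ℕ → ℚ)
    (hq0 : q 0 = 0) (hqk : q k = 1)
    (hmono : ∀ i j : ℕ, i < j → j ≤ k → q i < q j)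
    (D : ℕ) (hD : 0 < D)
    (hDden : ∀ i ≤ k, ((D : ℚ) * q i).den = 1)
    (hDmin : ∀ D' : ℕ, 0 < D' → (∀ i ≤ k, ((D' : ℚ) * q i).den = 1) → D ≤ D')
    (a : ℕ → ℤ) (ha : ∀ i ≤ k, (a i : ℚ) = (D : ℚ) * q i)
    (p q' p' q'' : ℤ) (hpq : p ≠ q') (hpq' : p' ≠ q'') :
    (xset D a k p q' = xset D a k p' q'' → ({p, q'} : Set ℤ) = {p', q''}) ∧
    (xset D a k p q' = xset D a k q' p ↔ ∀ i ≤ k, q i + q (k - i) = 1) := by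
  have hDQ : (0 : ℚ) < D := by exact_mod_cast hD
  have hD0 : (D : ℚ) ≠ 0 := ne_of_gt hDQ
  have ha0 : (a 0 : ℚ) = 0 := by rw [ha 0 (by omega), hq0]; ring
  have hak : (a k : ℚ) = D := by rw [ha k le_rfl, hqk]; ring
  have hamono : ∀ i j : ℕ, i < j → j ≤ k → (a i : ℚ) < a j := by
    intro i j hij hjk
    rw [ha i (le_trans hij.le hjk), ha j hjk]
    have h := hmono i j hij hjk
    nlinarith
  have hx : ∀ (i : ℕ) (u v : ℤ), xpt D a i u v = (u : ℚ) + (a i) * (((v : ℚ) - u) / D) := by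
    intro i u v
    unfold xpt
    field_simp
    ring
  -- reindexing lemma
  have reidx : ∀ (F : ℕ → ℚ) (z : ℚ), (∃ i ≤ k, z = F i) ↔ (∃ i ≤ k, z = F (k - i)) := by
    intro F z
    constructor
    · rintro ⟨i, hi, rfl⟩
      exact ⟨k - i, Nat.sub_le _ _, by rw [Nat.sub_sub_self hi]⟩
    · rintro ⟨i, hi, rfl⟩
      exact ⟨k - i, Nat.sub_le _ _, rfl⟩
  -- monotone enumeration of xset u v for u ≠ v
  have main1 : ∀ u v : ℤ, u ≠ v → ∃ F : ℕ → ℚ,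
      (∀ i j, i < j → j ≤ k → F i < F j) ∧
      (∀ z, z ∈ xset D a k u v ↔ ∃ i ≤ k, z = F i) ∧
      F 0 = min (u : ℚ) (v : ℚ) ∧ F k = max (u : ℚ) (v : ℚ) := by
    intro u v huv
    have hDt : (D : ℚ) * (((v : ℚ) - u) / D) = (v : ℚ) - u := by field_simp
    rcases lt_or_gt_of_ne huv with h | h
    · have hQ : (u : ℚ) < v := by exact_mod_cast h
      have ht : 0 < ((v : ℚ) - u) / D := by
        apply div_pos (by linarith) hDQ
      refine ⟨fun i => (u : ℚ) + a i * (((v : ℚ) - u) / D), ?_, ?_, ?_, ?_⟩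
      · intro i j hij hjk
        have := hamono i j hij hjk
        nlinarith
      · intro z
        simp only [xset, Set.mem_setOf_eq]
        constructor
        · rintro ⟨i, hi, rfl⟩; exact ⟨i, hi, by rw [hx]⟩
        · rintro ⟨i, hi, rfl⟩; exact ⟨i, hi, by rw [hx]⟩
      · simp only [ha0, min_eq_left hQ.le]; ring
      · simp only [hak, max_eq_right hQ.le]; rw [hDt]; ring
    · have hQ : (v : ℚ) < u := by exact_mod_cast h
      have ht : ((v : ℚ) - u) / D < 0 := by
        apply div_neg_of_neg_of_pos (by linarith) hDQ
      refine ⟨fun i => (u : ℚ) + a (k - i) * (((v : ℚ) - u) / D), ?_, ?_, ?_, ?_⟩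
      · intro i j hij hjk
        have h1 : (a (k - j) : ℚ) ≤ a (k - i) := by
          rcases Nat.lt_or_ge (k - j) (k - i) with h2 | h2
          · exact (hamono _ _ h2 (Nat.sub_le _ _)).le
          · have : k - i = k - j := by omega
            rw [this]
        rcases eq_or_lt_of_le h1 with h2 | h2
        · exfalso
          have hij' : k - j < k - i := by omega
          have := hamono _ _ hij' (Nat.sub_le _ _)
          rw [h2] at this
          exact lt_irrefl _ this
        · nlinarith
      · intro z
        simp only [xset, Set.mem_setOf_eq]
        rw [show (∃ i ≤ k, z = xpt D a i u v) ↔ (∃ i ≤ k, z = (u : ℚ) + a i * (((v : ℚ) - u) / D)) from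
          ⟨fun ⟨i, hi, hz⟩ => ⟨i, hi, by rw [hz, hx]⟩, fun ⟨i, hi, hz⟩ => ⟨i, hi, by rw [hz, hx]⟩⟩]
        exact reidx (fun i => (u : ℚ) + a i * (((v : ℚ) - u) / D)) z
      · simp only [Nat.sub_zero, hak, min_eq_right hQ.le]; rw [hDt]; ring
      · simp only [Nat.sub_self, ha0, max_eq_left hQ.le]; ring
  constructor
  · -- Part 1
    intro hS
    obtain ⟨F, hFm, hFs, hF0, hFk⟩ := main1 p q' hpq
    obtain ⟨G, hGm, hGs, hG0, hGk⟩ := main1 p' q'' hpq'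
    have hsame : ∀ z, (∃ i ≤ k, z = F i) ↔ (∃ i ≤ k, z = G i) := by
      intro z
      rw [← hFs z, ← hGs z, hS]
    have h0 := key_enum k F G hFm hGm hsame 0 (Nat.zero_le _)
    have hkk := key_enum k F G hFm hGm hsame k le_rfl
    rw [hF0, hG0] at h0
    rw [hFk, hGk] at hkk
    have hcase : ((p : ℚ) = p' ∧ (q' : ℚ) = q'') ∨ ((p : ℚ) = q'' ∧ (q' : ℚ) = p') := by
      rcases le_total (p : ℚ) (q' : ℚ) with h1 | h1 <;>
        rcases le_total (p' : ℚ) (q'' : ℚ) with h2 | h2 <;>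
        simp only [min_eq_left, min_eq_right, max_eq_left, max_eq_right, h1, h2] at h0 hkk
      · left; exact ⟨h0, hkk⟩
      · right
        constructor <;> linarith
      · right
        constructor <;> linarith
      · left
        constructor <;> linarith
    rcases hcase with ⟨h1, h2⟩ | ⟨h1, h2⟩
    · have e1 : p = p' := by exact_mod_cast h1
      have e2 : q' = q'' := by exact_mod_cast h2
      rw [e1, e2]
    · have e1 : p = q'' := by exact_mod_cast h1
      have e2 : q' = p' := by exact_mod_cast h2
      rw [e1, e2, Set.pair_comm]
  · -- Part 2
    constructor
    · -- forward: set equality implies symmetry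
      have aux : ∀ u v : ℤ, u < v → xset D a k u v = xset D a k v u →
          ∀ i ≤ k, q i + q (k - i) = 1 := by
        intro u v huv hS i hik
        have hQ : (u : ℚ) < v := by exact_mod_cast huv
        set t : ℚ := ((v : ℚ) - u) / D with ht_def
        have ht : 0 < t := div_pos (by linarith) hDQ
        have hDt : (D : ℚ) * t = (v : ℚ) - u := by rw [ht_def]; field_simp
        have hFm : ∀ i j, i < j → j ≤ k → (u : ℚ) + a i * t < (u : ℚ) + a j * t := by
          intro i j hij hjk
          have := hamono i j hij hjk
          nlinarith
        have hGm : ∀ i j, i < j → j ≤ k →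
            (u : ℚ) + ((D : ℚ) - a (k - i)) * t < (u : ℚ) + ((D : ℚ) - a (k - j)) * t := by
          intro i j hij hjk
          have hij' : k - j < k - i := by omega
          have := hamono _ _ hij' (Nat.sub_le _ _)
          nlinarith
        have hFs : ∀ z, z ∈ xset D a k u v ↔ ∃ i ≤ k, z = (u : ℚ) + a i * t := by
          intro z
          simp only [xset, Set.mem_setOf_eq]
          exact ⟨fun ⟨i, hi, hz⟩ => ⟨i, hi, by rw [hz, hx]⟩,
            fun ⟨i, hi, hz⟩ => ⟨i, hi, by rw [hz, hx]⟩⟩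
        have hGs : ∀ z, z ∈ xset D a k v u ↔
            ∃ i ≤ k, z = (u : ℚ) + ((D : ℚ) - a (k - i)) * t := by
          intro z
          simp only [xset, Set.mem_setOf_eq]
          have step : ∀ j : ℕ, xpt D a j v u = (u : ℚ) + ((D : ℚ) - a j) * t := by
            intro j
            rw [hx]
            have : ((u : ℚ) - v) / D = -t := by rw [ht_def]; ring
            rw [this]
            nlinarith [hDt]
          rw [show (∃ i ≤ k, z = xpt D a i v u) ↔
              (∃ i ≤ k, z = (u : ℚ) + ((D : ℚ) - a i) * t) from
            ⟨fun ⟨i, hi, hz⟩ => ⟨i, hi, by rw [hz, step]⟩,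
             fun ⟨i, hi, hz⟩ => ⟨i, hi, by rw [hz, step]⟩⟩]
          exact reidx (fun i => (u : ℚ) + ((D : ℚ) - a i) * t) z
        have hsame : ∀ z, (∃ i ≤ k, z = (u : ℚ) + a i * t) ↔
            (∃ i ≤ k, z = (u : ℚ) + ((D : ℚ) - a (k - i)) * t) := by
          intro z
          rw [← hFs z, ← hGs z, hS]
        have heq := key_enum k _ _ hFm hGm hsame i hik
        have hai : (a i : ℚ) + a (k - i) = D := by
          have ht0 : t ≠ 0 := ne_of_gt ht
          have h2 : (a i : ℚ) * t = ((D : ℚ) - a (k - i)) * t := by linarith [heq]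
          have h3 := mul_right_cancel₀ ht0 h2
          linarith
        have h4 : (D : ℚ) * q i + (D : ℚ) * q (k - i) = D := by
          rw [← ha i hik, ← ha (k - i) (Nat.sub_le _ _)]
          exact hai
        have h5 : (D : ℚ) * (q i + q (k - i)) = (D : ℚ) * 1 := by ring_nf; linarith
        exact mul_left_cancel₀ hD0 h5
      intro hS
      rcases lt_trichotomy p q' with h | h | h
      · exact aux p q' h hS
      · exact absurd h hpq
      · exact aux q' p h hS.symm
    · -- backward: symmetry implies set equality
      intro hs
      have hab : ∀ i ≤ k, (a (k - i) : ℚ) = (D : ℚ) - a i := by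
        intro i hi
        rw [ha (k - i) (Nat.sub_le _ _), ha i hi]
        have := hs i hi
        nlinarith
      ext z
      simp only [xset, Set.mem_setOf_eq]
      constructor
      · rintro ⟨i, hi, rfl⟩
        refine ⟨k - i, Nat.sub_le _ _, ?_⟩
        rw [hx, hx, hab i hi]
        field_simp
        ring
      · rintro ⟨i, hi, rfl⟩
        refine ⟨k - i, Nat.sub_le _ _, ?_⟩
        rw [hx, hx, hab i hi]
        field_simp
        ring
end

section
/- Let Q be a rational constellation pattern with k ≥ 2. For every measurable function g : [0,1] → ℝ with |g(x)| ≤ 1 for all x ∈ [0,1], and every real λ with |λ| ≤ 1, one has |Φ_Q(λ·g) − 2^{−k} − 2^{−k}·λ²·T_2(g)| ≤ λ⁴. -/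
/-!
Expanding both products over subsets `t` of the index set, the terms with `|t|` odd cancel and
each `t` with `|t|` even occurs with weight `2 / 2^(k+1)`. The terms `|t| = 0` and `|t| = 2`
give `2^(-k)` and `2^(-k) λ² T₂(g)`; every remaining term has `|t| ≥ 4`, so its integrand is at
most `λ⁴` in absolute value, and the weights of all even subsets add up to `1`.
-/

/-- `L i x y = (1 − qᵢ)x + qᵢ y`. -/
noncomputable def Laff (q : ℕ → ℚ) (i : ℕ) (x y : ℝ) : ℝ :=
  (1 - (q i : ℝ)) * x + (q i : ℝ) * y

/-- `Φ_Q(b) = ∫₀¹∫₀¹ [∏ᵢ (1 + b(Lᵢ(x,y)))/2 + ∏ᵢ (1 − b(Lᵢ(x,y)))/2] dy dx`. -/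
noncomputable def PhiQ (k : ℕ) (q : ℕ → ℚ) (b : ℝ → ℝ) : ℝ :=
  ∫ x in (0 : ℝ)..1, ∫ y in (0 : ℝ)..1,
    ((∏ i ∈ Finset.range (k + 1), (1 + b (Laff q i x y)) / 2) +
     (∏ i ∈ Finset.range (k + 1), (1 - b (Laff q i x y)) / 2))

/-- `T₂(g) = Σ_{0 ≤ i < j ≤ k} ∫₀¹∫₀¹ g(Lᵢ(x,y))·g(Lⱼ(x,y)) dy dx`. -/
noncomputable def T2 (k : ℕ) (q : ℕ → ℚ) (g : ℝ → ℝ) : ℝ :=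
  ∑ i ∈ Finset.range (k + 1), ∑ j ∈ Finset.Ioc i k,
    ∫ x in (0 : ℝ)..1, ∫ y in (0 : ℝ)..1, g (Laff q i x y) * g (Laff q j x y)

namespace Finset

variable {ι R : Type*}

theorem abs_prod_le_one {s : Finset ι} {f : ι → ℝ} (hf : ∀ i ∈ s, |f i| ≤ 1) :
    |∏ i ∈ s, f i| ≤ 1 := by
  rw [abs_prod]; exact prod_le_one (fun _ _ => abs_nonneg _) hf

theorem prod_one_add_add_prod_one_sub [CommRing R] (s : Finset ι) (b : ι → R) :
    ∏ i ∈ s, (1 + b i) + ∏ i ∈ s, (1 - b i) =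
      ∑ t ∈ s.powerset, (1 + (-1) ^ #t) * ∏ i ∈ t, b i := by
  simp_rw [sub_eq_add_neg, prod_one_add, prod_neg, ← sum_add_distrib, add_mul, one_mul]

theorem sum_powerset_one_add_neg_one_pow_card [CommRing R] {s : Finset ι} (hs : s.Nonempty) :
    ∑ t ∈ s.powerset, (1 + (-1 : R) ^ #t) = 2 ^ #s := by
  have h := congrArg (Int.cast : ℤ → R) (sum_powerset_neg_one_pow_card_of_nonempty hs)
  push_cast at h
  rw [sum_add_distrib, h, sum_const, card_powerset]
  simp

theorem prod_one_add_div_two_add_prod_one_sub_div_two [Field R] (s : Finset ι) (c : ι → R)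
    (lam : R) :
    ∏ i ∈ s, (1 + lam * c i) / 2 + ∏ i ∈ s, (1 - lam * c i) / 2 =
      2 / 2 ^ #s + 2 / 2 ^ #s * lam ^ 2 * ∑ t ∈ powersetCard 2 s, ∏ i ∈ t, c i +
        (∑ t ∈ s.powerset with 3 ≤ #t, (1 + (-1) ^ #t) * (lam ^ #t * ∏ i ∈ t, c i)) / 2 ^ #s := by
  have hsplit : ∀ t ∈ s.powerset, (1 + (-1) ^ #t) * (lam ^ #t * ∏ i ∈ t, c i) =
      (if #t = 0 then 2 else 0) + (if #t = 2 then 2 * lam ^ 2 * ∏ i ∈ t, c i else 0) +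
        (if 3 ≤ #t then (1 + (-1) ^ #t) * (lam ^ #t * ∏ i ∈ t, c i) else 0) := by
    intro t _
    obtain h | h | h | h : #t = 0 ∨ #t = 1 ∨ #t = 2 ∨ 3 ≤ #t := by omega
    · simp [card_eq_zero.1 h, one_add_one_eq_two]
    · simp [h]
    · simp [h, one_add_one_eq_two, mul_assoc]
    · simp [h, show #t ≠ 0 by omega, show #t ≠ 2 by omega]
  simp_rw [prod_div_distrib, prod_const, ← add_div, prod_one_add_add_prod_one_sub,
    prod_mul_distrib, prod_const]
  rw [sum_congr rfl hsplit, sum_add_distrib, sum_add_distrib, ← sum_filter, ← sum_filter,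
    ← sum_filter, ← powersetCard_eq_filter, ← powersetCard_eq_filter, powersetCard_zero,
    sum_singleton, ← mul_sum]
  ring

theorem abs_one_add_neg_one_pow_mul_le_of_three_le_card {t : Finset ι} (ht : 3 ≤ #t)
    {c : ι → ℝ} (hc : ∀ i ∈ t, |c i| ≤ 1) {lam : ℝ} (hlam : |lam| ≤ 1) :
    |(1 + (-1) ^ #t) * (lam ^ #t * ∏ i ∈ t, c i)| ≤ (1 + (-1) ^ #t) * lam ^ 4 := by
  rcases Nat.even_or_odd #t with heven | hodd
  · have h4 : 4 ≤ #t := by obtain ⟨m, hm⟩ := heven; omega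
    rw [heven.neg_one_pow, one_add_one_eq_two, abs_mul, abs_mul, abs_pow, abs_two]
    calc 2 * (|lam| ^ #t * |∏ i ∈ t, c i|) ≤ 2 * (|lam| ^ 4 * 1) :=
          mul_le_mul_of_nonneg_left (mul_le_mul (pow_le_pow_of_le_one (abs_nonneg _) hlam h4)
            (abs_prod_le_one hc) (abs_nonneg _) (by positivity)) zero_le_two
      _ = 2 * lam ^ 4 := by rw [pow_abs, abs_of_nonneg (by positivity), mul_one]
  · simp [hodd.neg_one_pow]

theorem abs_sum_powerset_three_le_card_le {s : Finset ι} (hs : s.Nonempty) {c : ι → ℝ}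
    (hc : ∀ i ∈ s, |c i| ≤ 1) {lam : ℝ} (hlam : |lam| ≤ 1) :
    |∑ t ∈ s.powerset with 3 ≤ #t, (1 + (-1) ^ #t) * (lam ^ #t * ∏ i ∈ t, c i)| ≤
      2 ^ #s * lam ^ 4 := by
  rw [← sum_powerset_one_add_neg_one_pow_card hs, sum_mul]
  refine (abs_sum_le_sum_abs _ _).trans <| (sum_le_sum fun t ht => ?_).trans <|
    sum_le_sum_of_subset_of_nonneg (filter_subset _ _) fun t _ _ => ?_
  · rw [mem_filter, mem_powerset] at ht
    exact abs_one_add_neg_one_pow_mul_le_of_three_le_card ht.2 (fun i hi => hc i (ht.1 hi)) hlam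
  · rcases neg_one_pow_eq_or ℝ #t with h | h <;> rw [h] <;> positivity

theorem abs_prod_add_prod_sub_sub_le {s : Finset ι} (hs : s.Nonempty) {c : ι → ℝ}
    (hc : ∀ i ∈ s, |c i| ≤ 1) {lam : ℝ} (hlam : |lam| ≤ 1) :
    |∏ i ∈ s, (1 + lam * c i) / 2 + ∏ i ∈ s, (1 - lam * c i) / 2 - 2 / 2 ^ #s
        - 2 / 2 ^ #s * lam ^ 2 * ∑ t ∈ powersetCard 2 s, ∏ i ∈ t, c i| ≤ lam ^ 4 := by
  rw [prod_one_add_div_two_add_prod_one_sub_div_two,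
    show ∀ a b x : ℝ, a + b + x - a - b = x from fun _ _ _ => by ring, abs_div, abs_of_pos (by positivity : (0 : ℝ) < 2 ^ #s), div_le_iff₀' (by positivity)]
  exact abs_sum_powerset_three_le_card_le hs hc hlam

theorem sum_powersetCard_two [LinearOrder ι] {M : Type*} [AddCommMonoid M] (s : Finset ι)
    (F : Finset ι → M) :
    ∑ t ∈ powersetCard 2 s, F t = ∑ i ∈ s, ∑ j ∈ s with i < j, F {i, j} := by
  rw [sum_sigma']
  symm
  refine sum_bij (fun p _ => {p.1, p.2}) ?_ ?_ ?_ (fun _ _ => rfl)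
  · rintro ⟨i, j⟩ h
    simp only [mem_sigma, mem_filter] at h
    exact mem_powersetCard.2 ⟨by simp [insert_subset_iff, h.1, h.2.1], card_pair h.2.2.ne⟩
  · rintro ⟨a, b⟩ hab ⟨c, d⟩ hcd h
    simp only [mem_sigma, mem_filter] at hab hcd
    have ha : a ∈ ({c, d} : Finset ι) := h ▸ by simp
    have hb : b ∈ ({c, d} : Finset ι) := h ▸ by simp
    have hc : c ∈ ({a, b} : Finset ι) := h.symm ▸ by simp
    simp only [mem_insert, mem_singleton] at ha hb hc
    grind
  · intro t ht
    obtain ⟨hts, hcard⟩ := mem_powersetCard.1 ht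
    obtain ⟨a, b, hab, rfl⟩ := card_eq_two.1 hcard
    rw [insert_subset_iff, singleton_subset_iff] at hts
    rcases hab.lt_or_gt with h | h
    · exact ⟨⟨a, b⟩, by simp [hts.1, hts.2, h], rfl⟩
    · exact ⟨⟨b, a⟩, by simp [hts.1, hts.2, h], pair_comm _ _⟩

theorem sum_powersetCard_two_range_prod [CommSemiring R] (k : ℕ) (c : ℕ → R) :
    ∑ t ∈ powersetCard 2 (range (k + 1)), ∏ i ∈ t, c i =
      ∑ i ∈ range (k + 1), ∑ j ∈ Ioc i k, c i * c j := by
  rw [sum_powersetCard_two]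
  refine sum_congr rfl fun i _ => ?_
  have hIoc : {j ∈ range (k + 1) | i < j} = Ioc i k := by
    ext j; simp only [mem_filter, mem_range, mem_Ioc]; omega
  rw [hIoc]
  exact sum_congr rfl fun j hj => prod_pair (mem_Ioc.1 hj).1.ne

theorem abs_prod_add_prod_sub_sub_zpow_le (k : ℕ) {c : ℕ → ℝ} (hc : ∀ i ≤ k, |c i| ≤ 1)
    {lam : ℝ} (hlam : |lam| ≤ 1) :
    |∏ i ∈ range (k + 1), (1 + lam * c i) / 2 + ∏ i ∈ range (k + 1), (1 - lam * c i) / 2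
        - (2 : ℝ) ^ (-(k : ℤ)) - (2 : ℝ) ^ (-(k : ℤ)) * lam ^ 2 *
          ∑ i ∈ range (k + 1), ∑ j ∈ Ioc i k, c i * c j| ≤ lam ^ 4 := by
  have h := abs_prod_add_prod_sub_sub_le nonempty_range_add_one
    (fun i hi => hc i (Nat.lt_succ_iff.1 (mem_range.1 hi))) hlam
  have h2 : (2 : ℝ) / 2 ^ (k + 1) = 2 ^ (-(k : ℤ)) := by
    rw [zpow_neg, zpow_natCast, pow_succ]; field_simp
  rwa [card_range, sum_powersetCard_two_range_prod, h2] at h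

end Finset

open MeasureTheory Finset

abbrev unitSquare : Set (ℝ × ℝ) := Set.Ioc 0 1 ×ˢ Set.Ioc 0 1

theorem intervalIntegral_intervalIntegral_eq_setIntegral_prod {E : Type*}
    [NormedAddCommGroup E] [NormedSpace ℝ E] {a b c d : ℝ} (hab : a ≤ b) (hcd : c ≤ d)
    {F : ℝ → ℝ → E} (hF : IntegrableOn (Function.uncurry F) (Set.Ioc a b ×ˢ Set.Ioc c d)) :
    ∫ x in a..b, ∫ y in c..d, F x y = ∫ p in Set.Ioc a b ×ˢ Set.Ioc c d, F p.1 p.2 := by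
  simp_rw [intervalIntegral.integral_of_le hab, intervalIntegral.integral_of_le hcd]
  exact (setIntegral_prod _ hF).symm

theorem abs_setIntegral_sub_sub_mul_le {α : Type*} [MeasurableSpace α] {μ : Measure α}
    {s : Set α} (hs : μ s = 1) {f g : α → ℝ} (hf : IntegrableOn f s μ) (hg : IntegrableOn g s μ)
    {a b C : ℝ} (h : ∀ x ∈ s, |f x - a - b * g x| ≤ C) :
    |∫ x in s, f x ∂μ - a - b * ∫ x in s, g x ∂μ| ≤ C := by
  have hs' : μ.real s = 1 := by simp [Measure.real, hs]
  have hconst : IntegrableOn (fun _ => a) s μ := integrableOn_const (by simp [hs])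
  have hint : ∫ x in s, f x ∂μ - a - b * ∫ x in s, g x ∂μ =
      ∫ x in s, (f x - a - b * g x) ∂μ := by
    rw [integral_sub (f := fun x => f x - a) (hf.sub hconst) (hg.const_mul b),
      integral_sub hf hconst, setIntegral_const, hs', one_smul, integral_const_mul]
  have hbound := norm_setIntegral_le_of_norm_le_const (f := fun x => f x - a - b * g x)
    (hs ▸ ENNReal.one_lt_top) h
  rwa [hint, ← Real.norm_eq_abs, ← mul_one C, ← hs']

theorem volume_unitSquare : volume unitSquare = 1 := by
  rw [Measure.volume_eq_prod, Measure.prod_prod, Real.volume_Ioc]; simp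

theorem integrableOn_unitSquare_of_abs_le {F : ℝ × ℝ → ℝ} (hF : Measurable F) {C : ℝ}
    (hC : ∀ p ∈ unitSquare, |F p| ≤ C) : IntegrableOn F unitSquare :=
  IntegrableOn.of_bound (by simp [volume_unitSquare]) hF.aestronglyMeasurable C
    (ae_restrict_of_forall_mem (measurableSet_Ioc.prod measurableSet_Ioc) hC)

@[fun_prop]
theorem measurable_Laff (q : ℕ → ℚ) (i : ℕ) : Measurable fun p : ℝ × ℝ => Laff q i p.1 p.2 := by
  unfold Laff; fun_prop

theorem Laff_mem_Icc {q : ℕ → ℚ} {i : ℕ} (hq : (q i : ℝ) ∈ Set.Icc 0 1) {p : ℝ × ℝ}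
    (hp : p ∈ unitSquare) : Laff q i p.1 p.2 ∈ Set.Icc 0 1 :=
  convex_Icc 0 1 (Set.Ioc_subset_Icc_self hp.1) (Set.Ioc_subset_Icc_self hp.2)
    (sub_nonneg.2 hq.2) hq.1 (sub_add_cancel 1 _)

theorem integrableOn_PhiQ_integrand {k : ℕ} {q : ℕ → ℚ}
    (hq : ∀ i ≤ k, (q i : ℝ) ∈ Set.Icc 0 1) {b : ℝ → ℝ} (hb : Measurable b)
    (hb1 : ∀ x ∈ Set.Icc (0 : ℝ) 1, |b x| ≤ 1) :
    IntegrableOn (fun p : ℝ × ℝ => ∏ i ∈ range (k + 1), (1 + b (Laff q i p.1 p.2)) / 2 +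
      ∏ i ∈ range (k + 1), (1 - b (Laff q i p.1 p.2)) / 2) unitSquare := by
  refine integrableOn_unitSquare_of_abs_le (C := 1 + 1) (by fun_prop) fun p hp => ?_
  have hbL : ∀ i ∈ range (k + 1), |b (Laff q i p.1 p.2)| ≤ 1 := fun i hi =>
    hb1 _ (Laff_mem_Icc (hq i (Nat.lt_succ_iff.1 (mem_range.1 hi))) hp)
  refine (abs_add_le _ _).trans (add_le_add (abs_prod_le_one fun i hi => ?_)
    (abs_prod_le_one fun i hi => ?_)) <;>
  · have := abs_le.1 (hbL i hi)
    rw [abs_le]; constructor <;> linarith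

theorem PhiQ_eq_setIntegral {k : ℕ} {q : ℕ → ℚ} {b : ℝ → ℝ}
    (hb : IntegrableOn (fun p : ℝ × ℝ => ∏ i ∈ range (k + 1), (1 + b (Laff q i p.1 p.2)) / 2 +
      ∏ i ∈ range (k + 1), (1 - b (Laff q i p.1 p.2)) / 2) unitSquare) :
    PhiQ k q b = ∫ p in unitSquare, (∏ i ∈ range (k + 1), (1 + b (Laff q i p.1 p.2)) / 2 +
      ∏ i ∈ range (k + 1), (1 - b (Laff q i p.1 p.2)) / 2) :=
  intervalIntegral_intervalIntegral_eq_setIntegral_prod zero_le_one zero_le_one hb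

theorem integrableOn_mul_Laff {q : ℕ → ℚ} {i j : ℕ} (hqi : (q i : ℝ) ∈ Set.Icc 0 1)
    (hqj : (q j : ℝ) ∈ Set.Icc 0 1) {g : ℝ → ℝ} (hg : Measurable g)
    (hg1 : ∀ x ∈ Set.Icc (0 : ℝ) 1, |g x| ≤ 1) :
    IntegrableOn (fun p : ℝ × ℝ => g (Laff q i p.1 p.2) * g (Laff q j p.1 p.2)) unitSquare :=
  integrableOn_unitSquare_of_abs_le (C := 1) (by fun_prop) fun p hp => by
    rw [abs_mul]
    exact mul_le_one₀ (hg1 _ (Laff_mem_Icc hqi hp)) (abs_nonneg _) (hg1 _ (Laff_mem_Icc hqj hp))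

theorem integrableOn_T2_integrand {k : ℕ} {q : ℕ → ℚ} (hq : ∀ i ≤ k, (q i : ℝ) ∈ Set.Icc 0 1)
    {g : ℝ → ℝ} (hg : Measurable g) (hg1 : ∀ x ∈ Set.Icc (0 : ℝ) 1, |g x| ≤ 1) :
    IntegrableOn (fun p : ℝ × ℝ => ∑ i ∈ range (k + 1), ∑ j ∈ Ioc i k,
      g (Laff q i p.1 p.2) * g (Laff q j p.1 p.2)) unitSquare :=
  integrable_finsetSum _ fun i hi => integrable_finsetSum _ fun j hj =>
    integrableOn_mul_Laff (hq i (Nat.lt_succ_iff.1 (mem_range.1 hi))) (hq j (mem_Ioc.1 hj).2) hg hg1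

theorem T2_eq_setIntegral {k : ℕ} {q : ℕ → ℚ} (hq : ∀ i ≤ k, (q i : ℝ) ∈ Set.Icc 0 1)
    {g : ℝ → ℝ} (hg : Measurable g) (hg1 : ∀ x ∈ Set.Icc (0 : ℝ) 1, |g x| ≤ 1) :
    T2 k q g = ∫ p in unitSquare, ∑ i ∈ range (k + 1), ∑ j ∈ Ioc i k,
      g (Laff q i p.1 p.2) * g (Laff q j p.1 p.2) := by
  have hint : ∀ i ∈ range (k + 1), ∀ j ∈ Ioc i k,
      IntegrableOn (fun p : ℝ × ℝ => g (Laff q i p.1 p.2) * g (Laff q j p.1 p.2)) unitSquare :=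
    fun i hi j hj => integrableOn_mul_Laff (hq i (Nat.lt_succ_iff.1 (mem_range.1 hi)))
      (hq j (mem_Ioc.1 hj).2) hg hg1
  rw [integral_finsetSum _ fun i hi => integrable_finsetSum _ (hint i hi)]
  refine sum_congr rfl fun i hi => ?_
  rw [integral_finsetSum _ (hint i hi)]
  exact sum_congr rfl fun j hj =>
    intervalIntegral_intervalIntegral_eq_setIntegral_prod zero_le_one zero_le_one (hint i hi j hj)

theorem stmt_9_general (k : ℕ) (q : ℕ → ℚ)
    (hq0 : q 0 = 0) (hqk : q k = 1)
    (hmono : ∀ i j : ℕ, i < j → j ≤ k → q i < q j)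
    (g : ℝ → ℝ) (hg : Measurable g) (hg1 : ∀ x ∈ Set.Icc (0 : ℝ) 1, |g x| ≤ 1)
    (lam : ℝ) (hlam : |lam| ≤ 1) :
    |PhiQ k q (fun x => lam * g x) - (2 : ℝ) ^ (-(k : ℤ))
        - (2 : ℝ) ^ (-(k : ℤ)) * lam ^ 2 * T2 k q g| ≤ lam ^ 4 := by
  have hq : ∀ i ≤ k, (q i : ℝ) ∈ Set.Icc 0 1 := fun i hi => by
    have hq_mono : MonotoneOn q (Set.Iic k) :=
      StrictMonoOn.monotoneOn fun a _ b hb hab => hmono a b hab hb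
    have h0 := hq_mono (Nat.zero_le k) hi (Nat.zero_le i)
    have h1 := hq_mono hi (Set.mem_Iic.2 le_rfl) hi
    rw [hq0] at h0; rw [hqk] at h1
    exact ⟨by exact_mod_cast h0, by exact_mod_cast h1⟩
  have hlamg : ∀ x ∈ Set.Icc (0 : ℝ) 1, |lam * g x| ≤ 1 := fun x hx => by
    rw [abs_mul]; exact mul_le_one₀ hlam (abs_nonneg _) (hg1 x hx)
  have hP := integrableOn_PhiQ_integrand hq (by fun_prop) hlamg
  have hQ := integrableOn_T2_integrand hq hg hg1
  rw [PhiQ_eq_setIntegral (b := fun x => lam * g x) hP, T2_eq_setIntegral hq hg hg1]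
  exact abs_setIntegral_sub_sub_mul_le volume_unitSquare hP hQ fun p hp =>
    abs_prod_add_prod_sub_sub_zpow_le k (fun i hi => hg1 _ (Laff_mem_Icc (hq i hi) hp)) hlam

/-- second-order expansion of `Φ_Q` at the random point. -/
theorem stmt_9 (k : ℕ) (hk : 2 ≤ k) (q : ℕ → ℚ)
    (hq0 : q 0 = 0) (hqk : q k = 1)
    (hmono : ∀ i j : ℕ, i < j → j ≤ k → q i < q j)
    (D : ℕ) (hD : 0 < D)
    (hDden : ∀ i ≤ k, ((D : ℚ) * q i).den = 1)
    (hDmin : ∀ D' : ℕ, 0 < D' → (∀ i ≤ k, ((D' : ℚ) * q i).den = 1) → D ≤ D')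
    (g : ℝ → ℝ) (hg : Measurable g) (hg1 : ∀ x ∈ Set.Icc (0 : ℝ) 1, |g x| ≤ 1)
    (lam : ℝ) (hlam : |lam| ≤ 1) :
    |PhiQ k q (fun x => lam * g x) - (2 : ℝ) ^ (-(k : ℤ))
        - (2 : ℝ) ^ (-(k : ℤ)) * lam ^ 2 * T2 k q g| ≤ lam ^ 4 :=
  stmt_9_general k q hq0 hqk hmono g hg hg1 lam hlam
end

section
/- Let Q be a rational constellation pattern with k ≥ 2 and let u(z) = cos(2πDz). Then T_2(u) = Σ_{0 ≤ i < j ≤ k} ∫₀¹∫₀¹ u(L_i(x,y))·u(L_j(x,y)) dy dx = 0. -/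
open Real

lemma cos_lin_integral (c : ℝ) (n : ℤ) (hn : n ≠ 0) :
    ∫ y in (0:ℝ)..1, Real.cos (c + 2 * π * n * y) = 0 := by
  have h2 : (2 * π * (n:ℝ)) ≠ 0 := by
    refine mul_ne_zero (mul_ne_zero two_ne_zero pi_ne_zero) ?_
    exact_mod_cast hn
  have h := intervalIntegral.integral_comp_mul_add (a := 0) (b := 1) Real.cos h2 c
  have heq : (fun y : ℝ => Real.cos (c + 2 * π * n * y))
      = fun y : ℝ => Real.cos (2 * π * n * y + c) := by
    funext y; ring_nf
  rw [heq, h, integral_cos]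
  have : 2 * π * (n:ℝ) * 1 + c = c + (n:ℝ) * (2 * π) := by ring
  rw [this, Real.sin_add_int_mul_two_pi]
  simp



/-- the mode `u(z) = cos(2πDz)` is a zero direction for `T₂`. -/
theorem stmt_11 (k : ℕ) (hk : 2 ≤ k) (q : ℕ → ℚ)
    (hq0 : q 0 = 0) (hqk : q k = 1)
    (hmono : ∀ i j : ℕ, i < j → j ≤ k → q i < q j)
    (D : ℕ) (hD : 0 < D)
    (hDden : ∀ i ≤ k, ((D : ℚ) * q i).den = 1)
    (hDmin : ∀ D' : ℕ, 0 < D' → (∀ i ≤ k, ((D' : ℚ) * q i).den = 1) → D ≤ D') :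
    T2 k q (fun z => Real.cos (2 * Real.pi * (D : ℝ) * z)) = 0 := by
  unfold T2
  refine Finset.sum_eq_zero fun i hi => Finset.sum_eq_zero fun j hj => ?_
  obtain ⟨hij, hjk⟩ := Finset.mem_Ioc.mp hj
  have hik : i ≤ k := le_trans (le_of_lt hij) hjk
  -- integer values
  set ai : ℤ := ((D : ℚ) * q i).num with hai
  set aj : ℤ := ((D : ℚ) * q j).num with haj
  have hcasti : ((ai : ℚ)) = (D : ℚ) * q i := (Rat.den_eq_one_iff _).mp (hDden i hik)
  have hcastj : ((aj : ℚ)) = (D : ℚ) * q j := (Rat.den_eq_one_iff _).mp (hDden j hjk)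
  have hri : ((ai : ℝ)) = (D : ℝ) * (q i : ℝ) := by exact_mod_cast congrArg (Rat.cast (K := ℝ)) hcasti
  have hrj : ((aj : ℝ)) = (D : ℝ) * (q j : ℝ) := by exact_mod_cast congrArg (Rat.cast (K := ℝ)) hcastj
  -- sign facts
  have hqij : q i < q j := hmono i j hij hjk
  have hqi0 : 0 ≤ q i := by
    rcases Nat.eq_zero_or_pos i with h0 | h0
    · rw [h0, hq0]
    · exact le_of_lt (hq0 ▸ hmono 0 i h0 hik)
  have hqj0 : 0 < q j := hq0 ▸ hmono 0 j (Nat.pos_of_ne_zero (by omega)) hjk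
  have hDQ : (0:ℚ) < D := by exact_mod_cast hD
  have hsum : ai + aj ≠ 0 := by
    have : (0:ℚ) < (ai:ℚ) + (aj:ℚ) := by
      rw [hcasti, hcastj]
      have h1 : (0:ℚ) ≤ (D:ℚ) * q i := mul_nonneg (le_of_lt hDQ) hqi0
      have h2 : (0:ℚ) < (D:ℚ) * q j := mul_pos hDQ hqj0
      linarith
    intro h; rw [show ((ai:ℚ) + aj) = ((ai + aj : ℤ) : ℚ) by push_cast; ring, h] at this
    simp at this
  have hdiff : ai - aj ≠ 0 := by
    have : (ai:ℚ) < (aj:ℚ) := by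
      rw [hcasti, hcastj]; exact mul_lt_mul_of_pos_left hqij hDQ
    have h2 : ai < aj := by exact_mod_cast this
    omega
  -- inner integral vanishes
  have hinner : ∀ x : ℝ,
      (∫ y in (0:ℝ)..1,
        Real.cos (2 * π * (D:ℝ) * Laff q i x y) * Real.cos (2 * π * (D:ℝ) * Laff q j x y)) = 0 := by
    intro x
    have key : ∀ y : ℝ,
        Real.cos (2 * π * (D:ℝ) * Laff q i x y) * Real.cos (2 * π * (D:ℝ) * Laff q j x y)
        = (Real.cos ((2 * π * (D:ℝ) * ((1 - (q i : ℝ)) + (1 - (q j : ℝ))) * x)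
              + 2 * π * ((ai + aj : ℤ) : ℝ) * y)
          + Real.cos ((2 * π * (D:ℝ) * ((q j : ℝ) - (q i : ℝ)) * x)
              + 2 * π * ((ai - aj : ℤ) : ℝ) * y)) / 2 := by
      intro y
      have hA : (2 * π * (D:ℝ) * ((1 - (q i : ℝ)) + (1 - (q j : ℝ))) * x)
              + 2 * π * ((ai + aj : ℤ) : ℝ) * y
          = (2 * π * (D:ℝ) * Laff q i x y) + (2 * π * (D:ℝ) * Laff q j x y) := by
        push_cast [hri, hrj, Laff]; ring
      have hB : (2 * π * (D:ℝ) * ((q j : ℝ) - (q i : ℝ)) * x)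
              + 2 * π * ((ai - aj : ℤ) : ℝ) * y
          = (2 * π * (D:ℝ) * Laff q i x y) - (2 * π * (D:ℝ) * Laff q j x y) := by
        push_cast [hri, hrj, Laff]; ring
      rw [hA, hB, Real.cos_add, Real.cos_sub]; ring
    rw [intervalIntegral.integral_congr (g := fun y =>
          (Real.cos ((2 * π * (D:ℝ) * ((1 - (q i : ℝ)) + (1 - (q j : ℝ))) * x)
              + 2 * π * ((ai + aj : ℤ) : ℝ) * y)
          + Real.cos ((2 * π * (D:ℝ) * ((q j : ℝ) - (q i : ℝ)) * x)
              + 2 * π * ((ai - aj : ℤ) : ℝ) * y)) / 2) (fun y _ => key y)]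
    rw [intervalIntegral.integral_div, intervalIntegral.integral_add
      ((Continuous.intervalIntegrable (by fun_prop) _ _))
      ((Continuous.intervalIntegrable (by fun_prop) _ _))]
    rw [cos_lin_integral _ _ hsum, cos_lin_integral _ _ hdiff]
    norm_num
  have hfin : (∫ x in (0:ℝ)..1, ∫ y in (0:ℝ)..1,
      Real.cos (2 * π * (D:ℝ) * Laff q i x y) * Real.cos (2 * π * (D:ℝ) * Laff q j x y)) = 0 := by
    rw [intervalIntegral.integral_congr (g := fun _ => (0:ℝ)) (fun x _ => hinner x)]
    simp
  exact hfin
end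

section
/- Let D be a positive integer, and let s, t be integers with 0 ≤ s < t ≤ D. Put L_a(x,y) = (1 − a/D)·x + (a/D)·y and U_{s,t} = ∫₀¹∫₀¹ cos(2πD·L_s(x,y)) · cos(2π(D+1)·L_t(x,y)) dy dx. Then U_{s,t} = (sin²(πt/D)/(2π²)) · [ 1/((t − s + t/D)·(t − s − 1 + t/D)) − 1/((s + t + t/D)·(2D − s − t + 1 − t/D)) ]. Moreover, U_{s,t} > 0 if t < D, and U_{s,D} = 0. -/
open Real

lemma int_cos (p c : ℝ) (hp : p ≠ 0) :
    ∫ u in (0:ℝ)..1, Real.cos (p * u + c) = (Real.sin (p + c) - Real.sin c) / p := by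
  rw [intervalIntegral.integral_comp_mul_add Real.cos hp c]
  simp [integral_cos, smul_eq_mul]
  ring

lemma int_sin (p c : ℝ) (hp : p ≠ 0) :
    ∫ u in (0:ℝ)..1, Real.sin (p * u + c) = (Real.cos c - Real.cos (p + c)) / p := by
  rw [intervalIntegral.integral_comp_mul_add Real.sin hp c]
  simp [integral_sin, smul_eq_mul]
  ring

lemma inner_cos (p q : ℝ) (hq : q ≠ 0) (x : ℝ) :
    ∫ y in (0:ℝ)..1, Real.cos (p * x + q * y) = (Real.sin (q + p * x) - Real.sin (p * x)) / q := by
  have : (fun y => Real.cos (p * x + q * y)) = fun y => Real.cos (q * y + p * x) := by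
    funext y; ring_nf
  rw [this, int_cos q (p * x) hq]

lemma outer_key (p q : ℝ) (hp : p ≠ 0) (hq : q ≠ 0) :
    ∫ x in (0:ℝ)..1, (Real.sin (q + p * x) - Real.sin (p * x)) / q
      = (Real.cos p + Real.cos q - Real.cos (p + q) - 1) / (p * q) := by
  rw [intervalIntegral.integral_div]
  rw [intervalIntegral.integral_sub
    (by apply Continuous.intervalIntegrable; fun_prop)
    (by apply Continuous.intervalIntegrable; fun_prop)]
  have h1 : (fun x => Real.sin (q + p * x)) = fun x => Real.sin (p * x + q) := by
    funext x; ring_nf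
  have h2 : (fun x => Real.sin (p * x)) = fun x => Real.sin (p * x + 0) := by
    funext x; ring_nf
  rw [h1, h2, int_sin p q hp, int_sin p 0 hp]
  simp only [Real.cos_zero, add_zero]
  field_simp
  ring

lemma key2 (p q r w : ℝ) (hp : p ≠ 0) (hq : q ≠ 0) (hr : r ≠ 0) (hw : w ≠ 0) :
    ∫ x in (0:ℝ)..1, ∫ y in (0:ℝ)..1,
        (Real.cos (p * x + q * y) + Real.cos (r * x + w * y)) / 2
      = ((Real.cos p + Real.cos q - Real.cos (p + q) - 1) / (p * q)
        + (Real.cos r + Real.cos w - Real.cos (r + w) - 1) / (r * w)) / 2 := by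
  have hin : ∀ x : ℝ, (∫ y in (0:ℝ)..1,
      (Real.cos (p * x + q * y) + Real.cos (r * x + w * y)) / 2)
      = ((Real.sin (q + p * x) - Real.sin (p * x)) / q
        + (Real.sin (w + r * x) - Real.sin (r * x)) / w) / 2 := by
    intro x
    rw [intervalIntegral.integral_div, intervalIntegral.integral_add
      (by apply Continuous.intervalIntegrable; fun_prop)
      (by apply Continuous.intervalIntegrable; fun_prop),
      inner_cos p q hq x, inner_cos r w hw x]
  simp_rw [hin]
  rw [intervalIntegral.integral_div, intervalIntegral.integral_add
      (by apply Continuous.intervalIntegrable; fun_prop)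
      (by apply Continuous.intervalIntegrable; fun_prop),
    outer_key p q hp hq, outer_key r w hr hw]


lemma alg_aux (P K A a B b : ℝ) (hP : P ≠ 0) (hA : A ≠ 0) (ha : a ≠ 0) (hB : B ≠ 0) (hb : b ≠ 0) :
    ((1 - 2*K) + (1 - 2*K) - 1 - 1) / ((2*P*a) * -(2*P*A))
      + ((1 - 2*K) + (1 - 2*K) - 1 - 1) / ((2*P*b) * (2*P*B)) = 2 * (K / (2*P^2) * (1/(A*a) - 1/(B*b))) := by
  field_simp
  ring

set_option maxHeartbeats 2000000 in
/-- the mixed correlation `U_{s,t}` of `cos(2πD·)` and `cos(2π(D+1)·)`. -/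
theorem stmt_13 (D s t : ℤ) (hD : 0 < D) (hs : 0 ≤ s) (hst : s < t) (htD : t ≤ D) :
    ((∫ x in (0 : ℝ)..1, ∫ y in (0 : ℝ)..1,
        Real.cos (2 * Real.pi * (D : ℝ) * ((1 - (s : ℝ) / (D : ℝ)) * x + ((s : ℝ) / (D : ℝ)) * y)) *
          Real.cos (2 * Real.pi * ((D : ℝ) + 1) *
            ((1 - (t : ℝ) / (D : ℝ)) * x + ((t : ℝ) / (D : ℝ)) * y)))
      = Real.sin (Real.pi * (t : ℝ) / (D : ℝ)) ^ 2 / (2 * Real.pi ^ 2) *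
          (1 / (((t : ℝ) - (s : ℝ) + (t : ℝ) / (D : ℝ)) *
                ((t : ℝ) - (s : ℝ) - 1 + (t : ℝ) / (D : ℝ)))
            - 1 / (((s : ℝ) + (t : ℝ) + (t : ℝ) / (D : ℝ)) *
                (2 * (D : ℝ) - (s : ℝ) - (t : ℝ) + 1 - (t : ℝ) / (D : ℝ))))) ∧
    (t < D → 0 < ∫ x in (0 : ℝ)..1, ∫ y in (0 : ℝ)..1,
        Real.cos (2 * Real.pi * (D : ℝ) * ((1 - (s : ℝ) / (D : ℝ)) * x + ((s : ℝ) / (D : ℝ)) * y)) *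
          Real.cos (2 * Real.pi * ((D : ℝ) + 1) *
            ((1 - (t : ℝ) / (D : ℝ)) * x + ((t : ℝ) / (D : ℝ)) * y))) ∧
    (t = D → (∫ x in (0 : ℝ)..1, ∫ y in (0 : ℝ)..1,
        Real.cos (2 * Real.pi * (D : ℝ) * ((1 - (s : ℝ) / (D : ℝ)) * x + ((s : ℝ) / (D : ℝ)) * y)) *
          Real.cos (2 * Real.pi * ((D : ℝ) + 1) *
            ((1 - (t : ℝ) / (D : ℝ)) * x + ((t : ℝ) / (D : ℝ)) * y))) = 0) := by
  have hD0 : (0:ℝ) < (D:ℝ) := by exact_mod_cast hD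
  have hDne : (D:ℝ) ≠ 0 := ne_of_gt hD0
  have hs0 : (0:ℝ) ≤ (s:ℝ) := by exact_mod_cast hs
  have hst1 : (s:ℝ) + 1 ≤ (t:ℝ) := by exact_mod_cast hst
  have htD' : (t:ℝ) ≤ (D:ℝ) := by exact_mod_cast htD
  have ht0 : (0:ℝ) < (t:ℝ) := by linarith
  have hu0 : 0 < (t:ℝ)/(D:ℝ) := div_pos ht0 hD0
  have hu1 : (t:ℝ)/(D:ℝ) ≤ 1 := by rw [div_le_one hD0]; exact htD'
  have ha1 : (0:ℝ) < (t:ℝ) - (s:ℝ) - 1 + (t:ℝ)/(D:ℝ) := by linarith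
  have hA1 : (0:ℝ) < (t:ℝ) - (s:ℝ) + (t:ℝ)/(D:ℝ) := by linarith
  have ha2 : (0:ℝ) < 2*(D:ℝ) - (s:ℝ) - (t:ℝ) + 1 - (t:ℝ)/(D:ℝ) := by linarith
  have hb2 : (0:ℝ) < (s:ℝ) + (t:ℝ) + (t:ℝ)/(D:ℝ) := by linarith
  have hπ : Real.pi ≠ 0 := Real.pi_ne_zero
  have hp1 : (2*Real.pi*((t:ℝ) - (s:ℝ) - 1 + (t:ℝ)/(D:ℝ))) ≠ 0 := by positivity
  have hq1 : (2*Real.pi*((s:ℝ) - (t:ℝ) - (t:ℝ)/(D:ℝ))) ≠ 0 := by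
    have : (s:ℝ) - (t:ℝ) - (t:ℝ)/(D:ℝ) < 0 := by linarith
    intro h
    have := mul_eq_zero.mp h
    rcases this with h' | h'
    · exact (by positivity : (0:ℝ) < 2*Real.pi).ne' h'
    · linarith
  have hp2 : (2*Real.pi*(2*(D:ℝ) - (s:ℝ) - (t:ℝ) + 1 - (t:ℝ)/(D:ℝ))) ≠ 0 := by positivity
  have hq2 : (2*Real.pi*((s:ℝ) + (t:ℝ) + (t:ℝ)/(D:ℝ))) ≠ 0 := by positivity
  have hpt : ∀ x y : ℝ,
      Real.cos (2 * Real.pi * (D : ℝ) * ((1 - (s : ℝ) / (D : ℝ)) * x + ((s : ℝ) / (D : ℝ)) * y)) *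
          Real.cos (2 * Real.pi * ((D : ℝ) + 1) *
            ((1 - (t : ℝ) / (D : ℝ)) * x + ((t : ℝ) / (D : ℝ)) * y))
      = (Real.cos ((2*Real.pi*((t:ℝ) - (s:ℝ) - 1 + (t:ℝ)/(D:ℝ))) * x
            + (2*Real.pi*((s:ℝ) - (t:ℝ) - (t:ℝ)/(D:ℝ))) * y)
        + Real.cos ((2*Real.pi*(2*(D:ℝ) - (s:ℝ) - (t:ℝ) + 1 - (t:ℝ)/(D:ℝ))) * x
            + (2*Real.pi*((s:ℝ) + (t:ℝ) + (t:ℝ)/(D:ℝ))) * y)) / 2 := by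
    intro x y
    have e1 : (2*Real.pi*((t:ℝ) - (s:ℝ) - 1 + (t:ℝ)/(D:ℝ))) * x
            + (2*Real.pi*((s:ℝ) - (t:ℝ) - (t:ℝ)/(D:ℝ))) * y
        = (2 * Real.pi * (D : ℝ) * ((1 - (s : ℝ) / (D : ℝ)) * x + ((s : ℝ) / (D : ℝ)) * y))
          - (2 * Real.pi * ((D : ℝ) + 1) *
            ((1 - (t : ℝ) / (D : ℝ)) * x + ((t : ℝ) / (D : ℝ)) * y)) := by
      field_simp
      ring
    have e2 : (2*Real.pi*(2*(D:ℝ) - (s:ℝ) - (t:ℝ) + 1 - (t:ℝ)/(D:ℝ))) * x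
            + (2*Real.pi*((s:ℝ) + (t:ℝ) + (t:ℝ)/(D:ℝ))) * y
        = (2 * Real.pi * (D : ℝ) * ((1 - (s : ℝ) / (D : ℝ)) * x + ((s : ℝ) / (D : ℝ)) * y))
          + (2 * Real.pi * ((D : ℝ) + 1) *
            ((1 - (t : ℝ) / (D : ℝ)) * x + ((t : ℝ) / (D : ℝ)) * y)) := by
      field_simp
      ring
    rw [e1, e2, Real.cos_sub, Real.cos_add]
    ring
  -- cosine values
  have hcos2 : Real.cos (2*(Real.pi*(t:ℝ)/(D:ℝ))) = 1 - 2*Real.sin (Real.pi*(t:ℝ)/(D:ℝ))^2 := by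
    have h := Real.sin_sq_add_cos_sq (Real.pi*(t:ℝ)/(D:ℝ))
    rw [Real.cos_two_mul]
    linarith
  have hc1 : Real.cos (2*Real.pi*((t:ℝ) - (s:ℝ) - 1 + (t:ℝ)/(D:ℝ)))
      = 1 - 2*Real.sin (Real.pi*(t:ℝ)/(D:ℝ))^2 := by
    have e : 2*Real.pi*((t:ℝ) - (s:ℝ) - 1 + (t:ℝ)/(D:ℝ))
        = 2*(Real.pi*(t:ℝ)/(D:ℝ)) + ((t - s - 1 : ℤ):ℝ)*(2*Real.pi) := by
      push_cast; field_simp; ring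
    rw [e, Real.cos_add_int_mul_two_pi, hcos2]
  have hc2 : Real.cos (2*Real.pi*((s:ℝ) - (t:ℝ) - (t:ℝ)/(D:ℝ)))
      = 1 - 2*Real.sin (Real.pi*(t:ℝ)/(D:ℝ))^2 := by
    have e : 2*Real.pi*((s:ℝ) - (t:ℝ) - (t:ℝ)/(D:ℝ))
        = -(2*(Real.pi*(t:ℝ)/(D:ℝ))) + ((s - t : ℤ):ℝ)*(2*Real.pi) := by
      push_cast; field_simp; ring
    rw [e, Real.cos_add_int_mul_two_pi, Real.cos_neg, hcos2]
  have hc3 : Real.cos (2*Real.pi*((t:ℝ) - (s:ℝ) - 1 + (t:ℝ)/(D:ℝ))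
      + 2*Real.pi*((s:ℝ) - (t:ℝ) - (t:ℝ)/(D:ℝ))) = 1 := by
    have e : 2*Real.pi*((t:ℝ) - (s:ℝ) - 1 + (t:ℝ)/(D:ℝ))
        + 2*Real.pi*((s:ℝ) - (t:ℝ) - (t:ℝ)/(D:ℝ)) = 0 + ((-1 : ℤ):ℝ)*(2*Real.pi) := by
      push_cast; ring
    rw [e, Real.cos_add_int_mul_two_pi, Real.cos_zero]
  have hc4 : Real.cos (2*Real.pi*(2*(D:ℝ) - (s:ℝ) - (t:ℝ) + 1 - (t:ℝ)/(D:ℝ)))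
      = 1 - 2*Real.sin (Real.pi*(t:ℝ)/(D:ℝ))^2 := by
    have e : 2*Real.pi*(2*(D:ℝ) - (s:ℝ) - (t:ℝ) + 1 - (t:ℝ)/(D:ℝ))
        = -(2*(Real.pi*(t:ℝ)/(D:ℝ))) + ((2*D - s - t + 1 : ℤ):ℝ)*(2*Real.pi) := by
      push_cast; field_simp; ring
    rw [e, Real.cos_add_int_mul_two_pi, Real.cos_neg, hcos2]
  have hc5 : Real.cos (2*Real.pi*((s:ℝ) + (t:ℝ) + (t:ℝ)/(D:ℝ)))
      = 1 - 2*Real.sin (Real.pi*(t:ℝ)/(D:ℝ))^2 := by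
    have e : 2*Real.pi*((s:ℝ) + (t:ℝ) + (t:ℝ)/(D:ℝ))
        = 2*(Real.pi*(t:ℝ)/(D:ℝ)) + ((s + t : ℤ):ℝ)*(2*Real.pi) := by
      push_cast; field_simp; ring
    rw [e, Real.cos_add_int_mul_two_pi, hcos2]
  have hc6 : Real.cos (2*Real.pi*(2*(D:ℝ) - (s:ℝ) - (t:ℝ) + 1 - (t:ℝ)/(D:ℝ))
      + 2*Real.pi*((s:ℝ) + (t:ℝ) + (t:ℝ)/(D:ℝ))) = 1 := by
    have e : 2*Real.pi*(2*(D:ℝ) - (s:ℝ) - (t:ℝ) + 1 - (t:ℝ)/(D:ℝ))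
        + 2*Real.pi*((s:ℝ) + (t:ℝ) + (t:ℝ)/(D:ℝ)) = 0 + ((2*D + 1 : ℤ):ℝ)*(2*Real.pi) := by
      push_cast; ring
    rw [e, Real.cos_add_int_mul_two_pi, Real.cos_zero]
  have hval : (∫ x in (0 : ℝ)..1, ∫ y in (0 : ℝ)..1,
        Real.cos (2 * Real.pi * (D : ℝ) * ((1 - (s : ℝ) / (D : ℝ)) * x + ((s : ℝ) / (D : ℝ)) * y)) *
          Real.cos (2 * Real.pi * ((D : ℝ) + 1) *
            ((1 - (t : ℝ) / (D : ℝ)) * x + ((t : ℝ) / (D : ℝ)) * y)))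
      = Real.sin (Real.pi * (t : ℝ) / (D : ℝ)) ^ 2 / (2 * Real.pi ^ 2) *
          (1 / (((t : ℝ) - (s : ℝ) + (t : ℝ) / (D : ℝ)) *
                ((t : ℝ) - (s : ℝ) - 1 + (t : ℝ) / (D : ℝ)))
            - 1 / (((s : ℝ) + (t : ℝ) + (t : ℝ) / (D : ℝ)) *
                (2 * (D : ℝ) - (s : ℝ) - (t : ℝ) + 1 - (t : ℝ) / (D : ℝ)))) := by
    simp_rw [hpt]
    rw [key2 _ _ _ _ hp1 hq1 hp2 hq2, hc1, hc2, hc3, hc4, hc5, hc6]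
    have hA1' : ((t:ℝ) - (s:ℝ) + (t:ℝ)/(D:ℝ)) ≠ 0 := ne_of_gt hA1
    have ha1' : ((t:ℝ) - (s:ℝ) - 1 + (t:ℝ)/(D:ℝ)) ≠ 0 := ne_of_gt ha1
    have ha2' : (2*(D:ℝ) - (s:ℝ) - (t:ℝ) + 1 - (t:ℝ)/(D:ℝ)) ≠ 0 := ne_of_gt ha2
    have hb2' : ((s:ℝ) + (t:ℝ) + (t:ℝ)/(D:ℝ)) ≠ 0 := ne_of_gt hb2
    rw [show (2 * Real.pi * ((s:ℝ) - (t:ℝ) - (t:ℝ)/(D:ℝ)))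
        = -(2 * Real.pi * ((t:ℝ) - (s:ℝ) + (t:ℝ)/(D:ℝ))) from by ring]
    rw [div_eq_iff (two_ne_zero)]
    have h := alg_aux Real.pi (Real.sin (Real.pi*(t:ℝ)/(D:ℝ))^2)
      ((t:ℝ) - (s:ℝ) + (t:ℝ)/(D:ℝ)) ((t:ℝ) - (s:ℝ) - 1 + (t:ℝ)/(D:ℝ))
      ((s:ℝ) + (t:ℝ) + (t:ℝ)/(D:ℝ)) (2*(D:ℝ) - (s:ℝ) - (t:ℝ) + 1 - (t:ℝ)/(D:ℝ))
      hπ hA1' ha1' hb2' ha2'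
    linarith [h]
  refine ⟨hval, ?_, ?_⟩
  · intro htlt
    rw [hval]
    have htlt' : (t:ℝ) < (D:ℝ) := by exact_mod_cast htlt
    have hS : 0 < Real.sin (Real.pi * (t:ℝ) / (D:ℝ)) := by
      apply Real.sin_pos_of_pos_of_lt_pi
      · positivity
      · rw [div_lt_iff₀ hD0]
        nlinarith [Real.pi_pos]
    apply mul_pos
    · positivity
    · rw [sub_pos]
      apply one_div_lt_one_div_of_lt
      · positivity
      · nlinarith [mul_pos hu0 hu0, hu0, hu1]
  · intro ht
    rw [hval]
    subst ht
    have e : Real.pi * (t:ℝ) / (t:ℝ) = Real.pi := by field_simp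
    rw [e, Real.sin_pi]
    simp
end

section
/- Let Q be a rational constellation pattern with k ≥ 2, let u(z) = cos(2πDz) and v(z) = cos(2π(D+1)z), and define Λ_Q = Σ_{0 ≤ i < j ≤ k} [ ∫₀¹∫₀¹ u(L_i(x,y))·v(L_j(x,y)) dy dx + ∫₀¹∫₀¹ v(L_i(x,y))·u(L_j(x,y)) dy dx ]. Then Λ_Q > 0. -/
open Real intervalIntegral
set_option maxHeartbeats 1000000

lemma intCos (c d : ℝ) (hc : c ≠ 0) :
    ∫ x in (0:ℝ)..1, Real.cos (c * x + d) = (Real.sin (c + d) - Real.sin d) / c := by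
  rw [intervalIntegral.integral_comp_mul_add Real.cos hc d, integral_cos]
  simp [smul_eq_mul, div_eq_inv_mul]

lemma intSin (c d : ℝ) (hc : c ≠ 0) :
    ∫ x in (0:ℝ)..1, Real.sin (c * x + d) = (Real.cos d - Real.cos (c + d)) / c := by
  rw [intervalIntegral.integral_comp_mul_add Real.sin hc d, integral_sin]
  simp [smul_eq_mul]; ring

lemma intSin0 (c : ℝ) (hc : c ≠ 0) :
    ∫ x in (0:ℝ)..1, Real.sin (c * x) = (1 - Real.cos c) / c := by
  simpa using intSin c 0 hc

lemma cosMulCos (a b : ℝ) : Real.cos a * Real.cos b = (Real.cos (a+b) + Real.cos (a-b))/2 := by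
  rw [Real.cos_add, Real.cos_sub]; ring

lemma prodInt (m n p r : ℝ)
    (hA : m*(1-p)+n*(1-r) ≠ 0) (hB : m*p+n*r ≠ 0)
    (hC : m*(1-p)-n*(1-r) ≠ 0) (hE : m*p-n*r ≠ 0) :
    (∫ x in (0:ℝ)..1, ∫ y in (0:ℝ)..1,
      Real.cos (2*π*m*((1-p)*x+p*y)) * Real.cos (2*π*n*((1-r)*x+r*y))) =
    ((Real.cos (2*π*(m*(1-p)+n*(1-r))) + Real.cos (2*π*(m*p+n*r))
        - Real.cos (2*π*((m*(1-p)+n*(1-r))+(m*p+n*r))) - 1)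
      / (4*π^2*(m*(1-p)+n*(1-r))*(m*p+n*r))
     + (Real.cos (2*π*(m*(1-p)-n*(1-r))) + Real.cos (2*π*(m*p-n*r))
        - Real.cos (2*π*((m*(1-p)-n*(1-r))+(m*p-n*r))) - 1)
      / (4*π^2*(m*(1-p)-n*(1-r))*(m*p-n*r))) / 2 := by
  have hπ : (π:ℝ) ≠ 0 := Real.pi_ne_zero
  set A := m*(1-p)+n*(1-r) with hAdef
  set B := m*p+n*r with hBdef
  set C := m*(1-p)-n*(1-r) with hCdef
  set E := m*p-n*r with hEdef
  have hB2 : 2*π*B ≠ 0 := by positivity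
  have hE2 : 2*π*E ≠ 0 := by positivity
  have hA2 : 2*π*A ≠ 0 := by positivity
  have hC2 : 2*π*C ≠ 0 := by positivity
  have key : ∀ x y : ℝ,
      Real.cos (2*π*m*((1-p)*x+p*y)) * Real.cos (2*π*n*((1-r)*x+r*y))
      = (Real.cos ((2*π*B)*y + (2*π*A)*x) + Real.cos ((2*π*E)*y + (2*π*C)*x))/2 := by
    intro x y
    rw [cosMulCos,
      show 2*π*m*((1-p)*x+p*y) + 2*π*n*((1-r)*x+r*y) = (2*π*B)*y + (2*π*A)*x by
        rw [hAdef, hBdef]; ring,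
      show 2*π*m*((1-p)*x+p*y) - 2*π*n*((1-r)*x+r*y) = (2*π*E)*y + (2*π*C)*x by
        rw [hCdef, hEdef]; ring]
  have inner : ∀ x : ℝ,
      (∫ y in (0:ℝ)..1, Real.cos (2*π*m*((1-p)*x+p*y)) * Real.cos (2*π*n*((1-r)*x+r*y)))
      = ((Real.sin (2*π*B + (2*π*A)*x) - Real.sin ((2*π*A)*x))/(2*π*B)
        + (Real.sin (2*π*E + (2*π*C)*x) - Real.sin ((2*π*C)*x))/(2*π*E))/2 := by
    intro x
    simp only [key]
    rw [intervalIntegral.integral_div, intervalIntegral.integral_add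
      (Continuous.intervalIntegrable (by fun_prop) _ _)
      (Continuous.intervalIntegrable (by fun_prop) _ _),
      intCos _ _ hB2, intCos _ _ hE2]
  simp only [inner]
  rw [intervalIntegral.integral_div, intervalIntegral.integral_add
      (Continuous.intervalIntegrable (by fun_prop) _ _)
      (Continuous.intervalIntegrable (by fun_prop) _ _),
    intervalIntegral.integral_div, intervalIntegral.integral_div,
    intervalIntegral.integral_sub
      (Continuous.intervalIntegrable (by fun_prop) _ _)
      (Continuous.intervalIntegrable (by fun_prop) _ _),
    intervalIntegral.integral_sub
      (Continuous.intervalIntegrable (by fun_prop) _ _)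
      (Continuous.intervalIntegrable (by fun_prop) _ _)]
  rw [show (fun x => Real.sin (2*π*B + (2*π*A)*x)) = fun x => Real.sin ((2*π*A)*x + 2*π*B) by
        funext x; ring_nf,
      show (fun x => Real.sin (2*π*E + (2*π*C)*x)) = fun x => Real.sin ((2*π*C)*x + 2*π*E) by
        funext x; ring_nf]
  rw [intSin _ _ hA2, intSin _ _ hC2, intSin0 _ hA2, intSin0 _ hC2,
    show (2*π*(A+B)) = 2*π*A + 2*π*B by ring, show (2*π*(C+E)) = 2*π*C + 2*π*E by ring]
  field_simp
  ring

lemma algebra1 (c A B C E t : ℝ) (hA : A ≠ 0) (hB : B ≠ 0)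
    (ht : t ≠ 0) (ht1 : t - 1 ≠ 0) (hCt : C = t - 1) (hEt : E = -t) (hπ : (0:ℝ) < π) :
    ((c + c - 1 - 1)/(4*π^2*A*B) + (c + c - 1 - 1)/(4*π^2*C*E))/2
      = (1-c)/(4*π^2)*(1/(t*(t-1)) - 1/(A*B)) := by
  subst hCt hEt
  have hπ' : π ≠ 0 := hπ.ne'
  field_simp
  ring

lemma algebra2 (c A B C E t : ℝ) (hA : A ≠ 0) (hB : B ≠ 0)
    (ht : t ≠ 0) (ht1 : t + 1 ≠ 0) (hCt : C = t + 1) (hEt : E = -t) (hπ : (0:ℝ) < π) :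
    ((c + c - 1 - 1)/(4*π^2*A*B) + (c + c - 1 - 1)/(4*π^2*C*E))/2
      = (1-c)/(4*π^2)*(1/(t*(t+1)) - 1/(A*B)) := by
  subst hCt hEt
  have hπ' : π ≠ 0 := hπ.ne'
  field_simp
  ring

lemma uvEval (D : ℕ) (hD : 0 < D) (p r : ℝ) (a b : ℤ)
    (hp0 : 0 ≤ p) (hpr : p < r) (hr1 : r ≤ 1)
    (ha : (D:ℝ)*p = a) (hb : (D:ℝ)*r = b) (hab : (a:ℝ) + 1 ≤ (b:ℝ)) :
    (∫ x in (0:ℝ)..1, ∫ y in (0:ℝ)..1,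
      Real.cos (2*π*(D:ℝ)*((1-p)*x+p*y)) * Real.cos (2*π*((D:ℝ)+1)*((1-r)*x+r*y)))
    = (1 - Real.cos (2*π*r))/(4*π^2) *
      (1/(((((D:ℝ)+1)*r - (D:ℝ)*p))*(((((D:ℝ)+1)*r - (D:ℝ)*p)) - 1))
        - 1/(((D:ℝ)*(1-p)+((D:ℝ)+1)*(1-r))*((D:ℝ)*p+((D:ℝ)+1)*r))) := by
  have hπ : (0:ℝ) < π := Real.pi_pos
  have hd1 : (1:ℝ) ≤ (D:ℝ) := by exact_mod_cast hD
  have hr0 : 0 < r := lt_of_le_of_lt hp0 hpr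
  have hp1 : p < 1 := lt_of_lt_of_le hpr hr1
  have hB' : 0 < (D:ℝ)*p+((D:ℝ)+1)*r := by nlinarith
  have hA' : 0 < (D:ℝ)*(1-p)+((D:ℝ)+1)*(1-r) := by nlinarith
  have hC' : 0 < (D:ℝ)*(1-p)-((D:ℝ)+1)*(1-r) := by nlinarith
  have hE' : (D:ℝ)*p-((D:ℝ)+1)*r < 0 := by nlinarith
  rw [prodInt ((D:ℝ)) ((D:ℝ)+1) p r hA'.ne' hB'.ne' hC'.ne' (ne_of_lt hE')]
  rw [show 2*π*((D:ℝ)*p+((D:ℝ)+1)*r) = 2*π*r + ((a+b:ℤ):ℝ)*(2*π) by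
        push_cast; linear_combination (2*π)*ha + (2*π)*hb,
      Real.cos_add_int_mul_two_pi,
      show 2*π*((D:ℝ)*(1-p)+((D:ℝ)+1)*(1-r)) = -(2*π*r) + ((2*(D:ℤ)+1-a-b:ℤ):ℝ)*(2*π) by
        push_cast; linear_combination (-(2*π))*ha + (-(2*π))*hb,
      Real.cos_add_int_mul_two_pi, Real.cos_neg,
      show 2*π*(((D:ℝ)*(1-p)+((D:ℝ)+1)*(1-r))+((D:ℝ)*p+((D:ℝ)+1)*r))
          = 0 + ((2*(D:ℤ)+1:ℤ):ℝ)*(2*π) by push_cast; ring,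
      Real.cos_add_int_mul_two_pi, Real.cos_zero,
      show 2*π*((D:ℝ)*p-((D:ℝ)+1)*r) = -(2*π*r) + ((a-b:ℤ):ℝ)*(2*π) by
        push_cast; linear_combination (2*π)*ha + (-(2*π))*hb,
      Real.cos_add_int_mul_two_pi, Real.cos_neg,
      show 2*π*((D:ℝ)*(1-p)-((D:ℝ)+1)*(1-r)) = 2*π*r + ((b-a-1:ℤ):ℝ)*(2*π) by
        push_cast; linear_combination (-(2*π))*ha + (2*π)*hb,
      Real.cos_add_int_mul_two_pi,
      show 2*π*(((D:ℝ)*(1-p)-((D:ℝ)+1)*(1-r))+((D:ℝ)*p-((D:ℝ)+1)*r))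
          = 0 + ((-1:ℤ):ℝ)*(2*π) by push_cast; ring,
      Real.cos_add_int_mul_two_pi, Real.cos_zero]
  exact algebra1 _ _ _ _ _ ((((D:ℝ)+1)*r - (D:ℝ)*p)) hA'.ne' hB'.ne'
    (by nlinarith) (by nlinarith) (by ring) (by ring) hπ

lemma vuEval (D : ℕ) (hD : 0 < D) (p r : ℝ) (a b : ℤ)
    (hp0 : 0 ≤ p) (hpr : p < r) (hr1 : r ≤ 1)
    (ha : (D:ℝ)*p = a) (hb : (D:ℝ)*r = b) (hab : (a:ℝ) + 1 ≤ (b:ℝ)) :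
    (∫ x in (0:ℝ)..1, ∫ y in (0:ℝ)..1,
      Real.cos (2*π*((D:ℝ)+1)*((1-p)*x+p*y)) * Real.cos (2*π*(D:ℝ)*((1-r)*x+r*y)))
    = (1 - Real.cos (2*π*p))/(4*π^2) *
      (1/((((D:ℝ)*r - ((D:ℝ)+1)*p))*((((D:ℝ)*r - ((D:ℝ)+1)*p)) + 1))
        - 1/((((D:ℝ)+1)*(1-p)+(D:ℝ)*(1-r))*(((D:ℝ)+1)*p+(D:ℝ)*r))) := by
  have hπ : (0:ℝ) < π := Real.pi_pos
  have hd1 : (1:ℝ) ≤ (D:ℝ) := by exact_mod_cast hD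
  have hr0 : 0 < r := lt_of_le_of_lt hp0 hpr
  have hp1 : p < 1 := lt_of_lt_of_le hpr hr1
  have hB' : 0 < ((D:ℝ)+1)*p+(D:ℝ)*r := by nlinarith
  have hA' : 0 < ((D:ℝ)+1)*(1-p)+(D:ℝ)*(1-r) := by nlinarith
  have hC' : 0 < ((D:ℝ)+1)*(1-p)-(D:ℝ)*(1-r) := by nlinarith
  have hE' : ((D:ℝ)+1)*p-(D:ℝ)*r < 0 := by nlinarith
  rw [prodInt ((D:ℝ)+1) ((D:ℝ)) p r hA'.ne' hB'.ne' hC'.ne' (ne_of_lt hE')]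
  rw [show 2*π*(((D:ℝ)+1)*p+(D:ℝ)*r) = 2*π*p + ((a+b:ℤ):ℝ)*(2*π) by
        push_cast; linear_combination (2*π)*ha + (2*π)*hb,
      Real.cos_add_int_mul_two_pi,
      show 2*π*(((D:ℝ)+1)*(1-p)+(D:ℝ)*(1-r)) = -(2*π*p) + ((2*(D:ℤ)+1-a-b:ℤ):ℝ)*(2*π) by
        push_cast; linear_combination (-(2*π))*ha + (-(2*π))*hb,
      Real.cos_add_int_mul_two_pi, Real.cos_neg,
      show 2*π*((((D:ℝ)+1)*(1-p)+(D:ℝ)*(1-r))+(((D:ℝ)+1)*p+(D:ℝ)*r))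
          = 0 + ((2*(D:ℤ)+1:ℤ):ℝ)*(2*π) by push_cast; ring,
      Real.cos_add_int_mul_two_pi, Real.cos_zero,
      show 2*π*(((D:ℝ)+1)*p-(D:ℝ)*r) = 2*π*p + ((a-b:ℤ):ℝ)*(2*π) by
        push_cast; linear_combination (2*π)*ha + (-(2*π))*hb,
      Real.cos_add_int_mul_two_pi,
      show 2*π*((((D:ℝ)+1)*(1-p)-(D:ℝ)*(1-r))) = -(2*π*p) + ((1+b-a:ℤ):ℝ)*(2*π) by
        push_cast; linear_combination (-(2*π))*ha + (2*π)*hb,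
      Real.cos_add_int_mul_two_pi, Real.cos_neg,
      show 2*π*((((D:ℝ)+1)*(1-p)-(D:ℝ)*(1-r))+(((D:ℝ)+1)*p-(D:ℝ)*r))
          = 0 + ((1:ℤ):ℝ)*(2*π) by push_cast; ring,
      Real.cos_add_int_mul_two_pi, Real.cos_zero]
  exact algebra2 _ _ _ _ _ (((D:ℝ)*r - ((D:ℝ)+1)*p)) hA'.ne' hB'.ne'
    (by nlinarith) (by nlinarith) (by ring) (by ring) hπ

lemma cosLtOne (r : ℝ) (h0 : 0 < r) (h1 : r < 1) : Real.cos (2*π*r) < 1 := by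
  have hπ : (0:ℝ) < π := Real.pi_pos
  refine lt_of_le_of_ne (Real.cos_le_one _) ?_
  intro h
  rw [Real.cos_eq_one_iff] at h
  obtain ⟨n, hn⟩ := h
  have h2 : (2*π) ≠ 0 := by positivity
  have hr : (n:ℝ) = r := by
    apply mul_right_cancel₀ h2
    exact hn.trans (by ring)
  have h3 : (0:ℝ) < (n:ℝ) := hr ▸ h0
  have h4 : (n:ℝ) < 1 := hr ▸ h1
  have h5 : (0:ℤ) < n := by exact_mod_cast h3
  have h6 : (n:ℤ) < 1 := by exact_mod_cast h4
  omega

lemma uvNonneg (D : ℕ) (hD : 0 < D) (p r : ℝ) (a b : ℤ)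
    (hp0 : 0 ≤ p) (hpr : p < r) (hr1 : r ≤ 1)
    (ha : (D:ℝ)*p = a) (hb : (D:ℝ)*r = b) (hab : (a:ℝ) + 1 ≤ (b:ℝ)) :
    0 ≤ ∫ x in (0:ℝ)..1, ∫ y in (0:ℝ)..1,
      Real.cos (2*π*(D:ℝ)*((1-p)*x+p*y)) * Real.cos (2*π*((D:ℝ)+1)*((1-r)*x+r*y)) := by
  have hπ : (0:ℝ) < π := Real.pi_pos
  rw [uvEval D hD p r a b hp0 hpr hr1 ha hb hab]
  set t := (((D:ℝ)+1)*r - (D:ℝ)*p) with htdef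
  have hr0 : 0 < r := lt_of_le_of_lt hp0 hpr
  have ht1 : 1 < t := by rw [htdef]; nlinarith
  have hDp : 0 ≤ (D:ℝ)*p := mul_nonneg (Nat.cast_nonneg D) hp0
  set A := (D:ℝ)*(1-p)+((D:ℝ)+1)*(1-r) with hAdef
  set B := (D:ℝ)*p+((D:ℝ)+1)*r with hBdef
  have h5 : t - 1 ≤ A := by rw [htdef, hAdef]; nlinarith
  have h6 : t ≤ B := by rw [htdef, hBdef]; nlinarith
  have hBpos : 0 < B := by linarith
  have hQpos : 0 < t*(t-1) := mul_pos (by linarith) (by linarith)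
  have hQle : t*(t-1) ≤ A*B := by
    calc t*(t-1) ≤ B*(t-1) := mul_le_mul_of_nonneg_right h6 (by linarith)
    _ ≤ B*A := mul_le_mul_of_nonneg_left h5 hBpos.le
    _ = A*B := mul_comm _ _
  apply mul_nonneg
  · apply div_nonneg _ (by positivity)
    linarith [Real.cos_le_one (2*π*r)]
  · exact sub_nonneg.mpr (one_div_le_one_div_of_le hQpos hQle)

lemma uvPos (D : ℕ) (hD : 0 < D) (p r : ℝ) (a b : ℤ)
    (hp0 : 0 ≤ p) (hpr : p < r) (hr1 : r < 1)
    (ha : (D:ℝ)*p = a) (hb : (D:ℝ)*r = b) (hab : (a:ℝ) + 1 ≤ (b:ℝ)) :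
    0 < ∫ x in (0:ℝ)..1, ∫ y in (0:ℝ)..1,
      Real.cos (2*π*(D:ℝ)*((1-p)*x+p*y)) * Real.cos (2*π*((D:ℝ)+1)*((1-r)*x+r*y)) := by
  have hπ : (0:ℝ) < π := Real.pi_pos
  rw [uvEval D hD p r a b hp0 hpr hr1.le ha hb hab]
  set t := (((D:ℝ)+1)*r - (D:ℝ)*p) with htdef
  have hr0 : 0 < r := lt_of_le_of_lt hp0 hpr
  have ht1 : 1 < t := by rw [htdef]; nlinarith
  have hDp : 0 ≤ (D:ℝ)*p := mul_nonneg (Nat.cast_nonneg D) hp0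
  set A := (D:ℝ)*(1-p)+((D:ℝ)+1)*(1-r) with hAdef
  set B := (D:ℝ)*p+((D:ℝ)+1)*r with hBdef
  have h5 : t - 1 < A := by rw [htdef, hAdef]; nlinarith
  have h6 : t ≤ B := by rw [htdef, hBdef]; nlinarith
  have hBpos : 0 < B := by linarith
  have hQpos : 0 < t*(t-1) := mul_pos (by linarith) (by linarith)
  have hQlt : t*(t-1) < A*B := by
    calc t*(t-1) ≤ B*(t-1) := mul_le_mul_of_nonneg_right h6 (by linarith)
    _ < B*A := mul_lt_mul_of_pos_left h5 hBpos
    _ = A*B := mul_comm _ _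
  apply mul_pos
  · apply div_pos _ (by positivity)
    linarith [cosLtOne r hr0 hr1]
  · exact sub_pos.mpr (one_div_lt_one_div_of_lt hQpos hQlt)

lemma vuNonneg (D : ℕ) (hD : 0 < D) (p r : ℝ) (a b : ℤ)
    (hp0 : 0 ≤ p) (hpr : p < r) (hr1 : r ≤ 1)
    (ha : (D:ℝ)*p = a) (hb : (D:ℝ)*r = b) (hab : (a:ℝ) + 1 ≤ (b:ℝ))
    (hbD : (b:ℝ) ≤ (D:ℝ)) :
    0 ≤ ∫ x in (0:ℝ)..1, ∫ y in (0:ℝ)..1,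
      Real.cos (2*π*((D:ℝ)+1)*((1-p)*x+p*y)) * Real.cos (2*π*(D:ℝ)*((1-r)*x+r*y)) := by
  have hπ : (0:ℝ) < π := Real.pi_pos
  rw [vuEval D hD p r a b hp0 hpr hr1 ha hb hab]
  set t := ((D:ℝ)*r - ((D:ℝ)+1)*p) with htdef
  have hr0 : 0 < r := lt_of_le_of_lt hp0 hpr
  have hp1 : p < 1 := lt_of_lt_of_le hpr hr1
  have ht0 : 0 < t := by rw [htdef]; nlinarith
  have hDp : 0 ≤ ((D:ℝ)+1)*p := mul_nonneg (by positivity) hp0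
  set A := ((D:ℝ)+1)*(1-p)+(D:ℝ)*(1-r) with hAdef
  set B := ((D:ℝ)+1)*p+(D:ℝ)*r with hBdef
  have h5 : t + 1 ≤ A := by rw [htdef, hAdef]; nlinarith
  have h6 : t ≤ B := by rw [htdef, hBdef]; nlinarith
  have hBpos : 0 < B := by linarith
  have hQpos : 0 < t*(t+1) := mul_pos ht0 (by linarith)
  have hQle : t*(t+1) ≤ A*B := by
    calc t*(t+1) ≤ B*(t+1) := mul_le_mul_of_nonneg_right h6 (by linarith)
    _ ≤ B*A := mul_le_mul_of_nonneg_left h5 hBpos.le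
    _ = A*B := mul_comm _ _
  apply mul_nonneg
  · apply div_nonneg _ (by positivity)
    linarith [Real.cos_le_one (2*π*p)]
  · exact sub_nonneg.mpr (one_div_le_one_div_of_le hQpos hQle)

/-- the mixed term `Λ_Q` with `u(z) = cos(2πDz)`, `v(z) = cos(2π(D+1)z)`
is strictly positive. -/
theorem stmt_15 (k : ℕ) (hk : 2 ≤ k) (q : ℕ → ℚ)
    (hq0 : q 0 = 0) (hqk : q k = 1)
    (hmono : ∀ i j : ℕ, i < j → j ≤ k → q i < q j)
    (D : ℕ) (hD : 0 < D)
    (hDden : ∀ i ≤ k, ((D : ℚ) * q i).den = 1)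
    (hDmin : ∀ D' : ℕ, 0 < D' → (∀ i ≤ k, ((D' : ℚ) * q i).den = 1) → D ≤ D') :
    0 < ∑ i ∈ Finset.range (k + 1), ∑ j ∈ Finset.Ioc i k,
        ((∫ x in (0 : ℝ)..1, ∫ y in (0 : ℝ)..1,
            Real.cos (2 * Real.pi * (D : ℝ) * Laff q i x y) *
              Real.cos (2 * Real.pi * ((D : ℝ) + 1) * Laff q j x y)) +
         (∫ x in (0 : ℝ)..1, ∫ y in (0 : ℝ)..1,
            Real.cos (2 * Real.pi * ((D : ℝ) + 1) * Laff q i x y) *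
              Real.cos (2 * Real.pi * (D : ℝ) * Laff q j x y))) := by
  -- data extraction for a pair i < j ≤ k
  have setup : ∀ i j : ℕ, i < j → j ≤ k →
      ∃ a b : ℤ, 0 ≤ ((q i : ℚ) : ℝ) ∧ ((q i : ℚ) : ℝ) < ((q j : ℚ) : ℝ) ∧
        ((q j : ℚ) : ℝ) ≤ 1 ∧ (D:ℝ) * ((q i : ℚ) : ℝ) = a ∧ (D:ℝ) * ((q j : ℚ) : ℝ) = b ∧
        (a:ℝ) + 1 ≤ (b:ℝ) ∧ (b:ℝ) ≤ (D:ℝ) ∧ (j < k → ((q j : ℚ) : ℝ) < 1) := by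
    intro i j hij hjk
    have hik : i ≤ k := le_of_lt (lt_of_lt_of_le hij hjk)
    have hai : ((((D : ℚ) * q i).num : ℚ)) = (D : ℚ) * q i :=
      (Rat.den_eq_one_iff _).mp (hDden i hik)
    have haj : ((((D : ℚ) * q j).num : ℚ)) = (D : ℚ) * q j :=
      (Rat.den_eq_one_iff _).mp (hDden j hjk)
    refine ⟨((D : ℚ) * q i).num, ((D : ℚ) * q j).num, ?_, ?_, ?_, ?_, ?_, ?_, ?_, ?_⟩
    · rcases Nat.eq_zero_or_pos i with h | h
      · subst h; rw [hq0]; norm_num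
      · have := hmono 0 i h hik
        rw [hq0] at this
        have : (0:ℚ) ≤ q i := this.le
        exact_mod_cast this
    · exact_mod_cast hmono i j hij hjk
    · rcases eq_or_lt_of_le hjk with h | h
      · subst h; rw [hqk]; norm_num
      · have := hmono j k h le_rfl
        rw [hqk] at this
        have : q j ≤ 1 := this.le
        exact_mod_cast this
    · exact_mod_cast congrArg (fun x : ℚ => (x : ℝ)) hai.symm
    · exact_mod_cast congrArg (fun x : ℚ => (x : ℝ)) haj.symm
    · have hlt : ((D : ℚ) * q i) < ((D : ℚ) * q j) := by
        have hD' : (0:ℚ) < (D:ℚ) := by exact_mod_cast hD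
        exact mul_lt_mul_of_pos_left (hmono i j hij hjk) hD'
      have : ((D : ℚ) * q i).num < ((D : ℚ) * q j).num := by
        rw [← hai, ← haj] at hlt
        exact_mod_cast hlt
      have h2 : ((D : ℚ) * q i).num + 1 ≤ ((D : ℚ) * q j).num := this
      exact_mod_cast h2
    · have hle : ((D : ℚ) * q j) ≤ (D:ℚ) := by
        have hj1 : q j ≤ 1 := by
          rcases eq_or_lt_of_le hjk with h | h
          · subst h; rw [hqk]
          · exact (hmono j k h le_rfl).le.trans hqk.le
        nlinarith [show (0:ℚ) < (D:ℚ) from by exact_mod_cast hD]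
      rw [← haj] at hle
      exact_mod_cast hle
    · intro hjk'
      have := hmono j k hjk' le_rfl
      rw [hqk] at this
      exact_mod_cast this
  have hnn : ∀ i j : ℕ, i < j → j ≤ k →
      0 ≤ ((∫ x in (0 : ℝ)..1, ∫ y in (0 : ℝ)..1,
            Real.cos (2 * Real.pi * (D : ℝ) * Laff q i x y) *
              Real.cos (2 * Real.pi * ((D : ℝ) + 1) * Laff q j x y)) +
         (∫ x in (0 : ℝ)..1, ∫ y in (0 : ℝ)..1,
            Real.cos (2 * Real.pi * ((D : ℝ) + 1) * Laff q i x y) *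
              Real.cos (2 * Real.pi * (D : ℝ) * Laff q j x y))) := by
    intro i j hij hjk
    obtain ⟨a, b, h1, h2, h3, h4, h5, h6, h7, _⟩ := setup i j hij hjk
    simp only [Laff]
    exact add_nonneg (uvNonneg D hD _ _ a b h1 h2 h3 h4 h5 h6)
      (vuNonneg D hD _ _ a b h1 h2 h3 h4 h5 h6 h7)
  apply Finset.sum_pos'
  · intro i hi
    apply Finset.sum_nonneg
    intro j hj
    rw [Finset.mem_Ioc] at hj
    exact hnn i j hj.1 hj.2
  · refine ⟨0, Finset.mem_range.mpr (by omega), ?_⟩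
    apply Finset.sum_pos'
    · intro j hj
      rw [Finset.mem_Ioc] at hj
      exact hnn 0 j hj.1 hj.2
    · refine ⟨1, Finset.mem_Ioc.mpr ⟨by omega, by omega⟩, ?_⟩
      obtain ⟨a, b, h1, h2, h3, h4, h5, h6, h7, h8⟩ := setup 0 1 (by omega) (by omega)
      simp only [Laff]
      exact add_pos_of_pos_of_nonneg
        (uvPos D hD _ _ a b h1 h2 (h8 (by omega)) h4 h5 h6)
        (vuNonneg D hD _ _ a b h1 h2 h3 h4 h5 h6 h7)
end
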